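/- arXiv:1112.2012 — 8 statements merged into one kernel-verified Lean document; each statement's English description precedes it below -/
import Mathlib

section
/- Let F be a field and n a natural number. Let A and B be F-linear subspaces of the space of n×n matrices over F, all of whose elements are diagonal matrices. If there exists an invertible n×n matrix g over F such that {g M g⁻¹ : M ∈ A} = B, then there exists a permutation σ of {1,…,n} such that the permutation matrix P_σ satisfies {P_σ M P_σ⁻¹ : M ∈ A} = B. -/
/-!
Let `ε_j(D) = D j j` and `β_i(D) = (g D g⁻¹) i i` for `D ∈ A`. For every function `v : A → F`
the joint eigenspace `{x | ∀ D ∈ A, D x = v(D) x}` of the diagonal matrices in `A` is spanned by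
the basis vectors `e_j` with `ε_j = v`, and likewise for `g A g⁻¹` with the `β_i`; since `g` maps
the first eigenspace onto the second, `ε` and `β` have fibres of equal size. A permutation `σ`
matching these fibres satisfies `β_{σ j} = ε_j`, so `P_σ` and `g` conjugate each `D ∈ A` to the
same diagonal matrix.
-/

open Module Equiv

namespace Matrix

section JointEigenspace

variable {ι m F : Type*} [Field F] [Fintype m] [DecidableEq m]

def jointEigenspace (D : ι → Matrix m m F) (v : ι → F) : Submodule F (m → F) :=
  ⨅ k, End.eigenspace (toLin' (D k)) (v k)

lemma mem_jointEigenspace {D : ι → Matrix m m F} {v : ι → F} {x : m → F} :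
    x ∈ jointEigenspace D v ↔ ∀ k, D k *ᵥ x = v k • x := by
  simp [jointEigenspace]

lemma jointEigenspace_conj (g : (Matrix m m F)ˣ) (D : ι → Matrix m m F) (v : ι → F) :
    jointEigenspace (fun k => (g : Matrix m m F) * D k * (↑g⁻¹ : Matrix m m F)) v =
      (jointEigenspace D v).map (toLin' (g : Matrix m m F)) := by
  ext y
  simp only [mem_jointEigenspace, Submodule.mem_map, toLin'_apply]
  constructor
  · intro h
    refine ⟨(↑g⁻¹ : Matrix m m F) *ᵥ y, fun k => ?_, by simp [mulVec_mulVec]⟩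
    rw [← mulVec_smul, ← h k]
    simp [mulVec_mulVec, ← mul_assoc]
  · rintro ⟨x, hx, rfl⟩ k
    rw [mulVec_mulVec, mul_assoc, Units.inv_mul, mul_one, ← mulVec_mulVec, hx k, mulVec_smul]

lemma finrank_jointEigenspace_conj (g : (Matrix m m F)ˣ) (D : ι → Matrix m m F) (v : ι → F) :
    finrank F (jointEigenspace (fun k => (g : Matrix m m F) * D k * (↑g⁻¹ : Matrix m m F)) v) =
      finrank F (jointEigenspace D v) := by
  rw [jointEigenspace_conj]
  exact LinearEquiv.finrank_map_eq (toLinearEquiv' _ g.invertible) _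

lemma jointEigenspace_of_isDiag {D : ι → Matrix m m F} (hD : ∀ k, (D k).IsDiag) (v : ι → F) :
    jointEigenspace D v =
      ⨅ j ∈ {j | (fun k => D k j j) ≠ v}, LinearMap.ker (LinearMap.proj j) := by
  ext x
  have hmul : ∀ k j, (D k *ᵥ x) j = D k j j * x j := fun k j => by
    rw [← (hD k).diagonal_diag, mulVec_diagonal]
    simp
  simp only [mem_jointEigenspace, Submodule.mem_iInf, LinearMap.mem_ker, LinearMap.proj_apply,
    funext_iff, hmul, Pi.smul_apply, smul_eq_mul, Set.mem_ofPred_eq, ne_eq, not_forall]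
  constructor
  · rintro h j ⟨k, hk⟩
    exact (mul_eq_mul_right_iff.mp (h k j)).resolve_left hk
  · intro h k j
    by_cases hk : D k j j = v k
    · rw [hk]
    · rw [h j ⟨k, hk⟩, mul_zero, mul_zero]

lemma finrank_jointEigenspace_of_isDiag {D : ι → Matrix m m F} (hD : ∀ k, (D k).IsDiag)
    (v : ι → F) :
    finrank F (jointEigenspace D v) = Nat.card {j // (fun k => D k j j) = v} := by
  classical
  have hIJ : IsCompl {j | (fun k => D k j j) = v} {j | (fun k => D k j j) ≠ v} :=
    isCompl_compl
  rw [jointEigenspace_of_isDiag hD,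
    (LinearMap.iInfKerProjEquiv F (fun _ ↦ F) hIJ.disjoint hIJ.codisjoint.top_le).finrank_eq,
    finrank_fintype_fun_eq_card, Nat.card_eq_fintype_card]
  rfl

lemma exists_perm_diag_conj_eq (g : (Matrix m m F)ˣ) {D : ι → Matrix m m F}
    (hD : ∀ k, (D k).IsDiag)
    (hgD : ∀ k, ((g : Matrix m m F) * D k * (↑g⁻¹ : Matrix m m F)).IsDiag) :
    ∃ σ : Perm m, ∀ k j,
      ((g : Matrix m m F) * D k * (↑g⁻¹ : Matrix m m F)) (σ j) (σ j) = D k j j := by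
  have hcard : ∀ v : ι → F, Nat.card {j // (fun k => D k j j) = v} =
      Nat.card {i // (fun k => ((g : Matrix m m F) * D k * (↑g⁻¹ : Matrix m m F)) i i) = v} :=
    fun v => by
      rw [← finrank_jointEigenspace_of_isDiag hD, ← finrank_jointEigenspace_of_isDiag hgD,
        finrank_jointEigenspace_conj]
  let σ : Perm m := ofFiberEquiv fun v => (Finite.card_eq.mp (hcard v)).some
  exact ⟨σ, fun k j => congrFun (ofFiberEquiv_map (g := fun i k =>
    ((g : Matrix m m F) * D k * (↑g⁻¹ : Matrix m m F)) i i) _ j) k⟩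

end JointEigenspace

lemma permMatrix_mul_mul_inv {m R : Type*} [Fintype m] [DecidableEq m] [CommRing R] (σ : Perm m)
    (M : Matrix m m R) :
    σ.permMatrix R * M * (σ.permMatrix R)⁻¹ = M.submatrix σ σ := by
  have hinv : (σ.permMatrix R)⁻¹ = σ⁻¹.permMatrix R :=
    inv_eq_right_inv (by rw [← permMatrix_mul, inv_mul_cancel, permMatrix_one])
  rw [hinv, PEquiv.toMatrix_toPEquiv_mul, PEquiv.mul_toMatrix_toPEquiv]
  rfl

lemma IsDiag.ext_of_diag_eq {α m : Type*} [Zero α] [DecidableEq m] {M N : Matrix m m α}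
    (hM : M.IsDiag) (hN : N.IsDiag) (h : ∀ i, M i i = N i i) : M = N := by
  rw [← hM.diagonal_diag, ← hN.diagonal_diag]
  exact congrArg diagonal (funext h)

end Matrix

open Matrix

/-- If two linear subspaces of diagonal `n × n` matrices over a field `F`
are conjugate by some invertible matrix `g`, then they are conjugate by a permutation
matrix `P_σ`, where `(P_σ)_{ij} = 1` iff `i = σ j`. -/
theorem stmt_0 (F : Type*) [Field F] (n : ℕ)
    (A B : Submodule F (Matrix (Fin n) (Fin n) F))
    (hA : ∀ M ∈ A, M.IsDiag) (hB : ∀ M ∈ B, M.IsDiag)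
    (hconj : ∃ g : (Matrix (Fin n) (Fin n) F)ˣ,
      (fun M => (g : Matrix (Fin n) (Fin n) F) * M *
          ((g⁻¹ : (Matrix (Fin n) (Fin n) F)ˣ) : Matrix (Fin n) (Fin n) F)) ''
        (A : Set (Matrix (Fin n) (Fin n) F)) = (B : Set (Matrix (Fin n) (Fin n) F))) :
    ∃ σ : Equiv.Perm (Fin n),
      (fun M => (Matrix.of fun i j => if i = σ j then (1 : F) else 0) * M *
          (Matrix.of fun i j => if i = σ j then (1 : F) else 0)⁻¹) ''
        (A : Set (Matrix (Fin n) (Fin n) F)) = (B : Set (Matrix (Fin n) (Fin n) F)) := by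
  obtain ⟨g, hg⟩ := hconj
  have hgA : ∀ M ∈ A,
      (g : Matrix (Fin n) (Fin n) F) * M * (↑g⁻¹ : Matrix (Fin n) (Fin n) F) ∈ B := fun M hM => by
    rw [← SetLike.mem_coe, ← hg]
    exact Set.mem_image_of_mem _ hM
  obtain ⟨σ, hσ⟩ := exists_perm_diag_conj_eq (ι := A) g
    (D := fun M => (M : Matrix (Fin n) (Fin n) F)) (fun M => hA M M.2) (fun M => hB _ (hgA M M.2))
  have hP : (of fun i j => if i = σ j then (1 : F) else 0) = σ⁻¹.permMatrix F := by
    ext i j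
    simp [PEquiv.toMatrix_apply, ← Perm.eq_inv_iff_eq]
  refine ⟨σ, hP ▸ hg ▸ Set.image_congr fun M hM => ?_⟩
  rw [permMatrix_mul_mul_inv]
  refine ((hA M hM).submatrix σ⁻¹.injective).ext_of_diag_eq (hB _ (hgA M hM)) fun i => ?_
  simpa using (hσ ⟨M, hM⟩ (σ⁻¹ i)).symm
end

section
/- Let F be a field, n a natural number, and V, W ⊆ F^n linear subspaces. For v ∈ F^n let diag(v) denote the diagonal n×n matrix with diagonal entries v, and set diag(V) = {diag(v) : v ∈ V}. Then there exists an invertible n×n matrix g over F with {g M g⁻¹ : M ∈ diag(V)} = diag(W) if and only if there exists a permutation σ of {1,…,n} with {(v_{σ(1)},…,v_{σ(n)}) : v ∈ V} = W. -/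
open Function Matrix Set

/-!
Since `det g ≠ 0`, some term of the Leibniz expansion of `det gᵀ` is nonzero: there is a
permutation `σ` with `g i (σ i) ≠ 0` for all `i`. If `g diag(v) g⁻¹ = diag(w)`, comparing
entries of `g diag(v) = diag(w) g` gives `w i = v j` whenever `g i j ≠ 0`, hence `w = v ∘ σ`.
Conversely, conjugation by the permutation matrix of `σ` sends `diag(v)` to `diag(v ∘ σ)`.
-/

theorem Set.image_image_eq_image_iff {α β γ δ : Type*} {e₁ : α → β} {g : β → γ}
    {f : α → δ} {e₂ : δ → γ} (he₂ : Injective e₂) {s : Set α} {t : Set δ}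
    (h : ∀ a ∈ s, g (e₁ a) = e₂ (f a)) : g '' (e₁ '' s) = e₂ '' t ↔ f '' s = t := by
  rw [image_image, image_congr h, ← image_image, (image_injective.mpr he₂).eq_iff]

namespace Matrix

variable {n R : Type*} [Fintype n] [DecidableEq n]

theorem exists_perm_forall_apply_ne_zero_of_det_ne_zero [CommRing R] {A : Matrix n n R}
    (h : A.det ≠ 0) : ∃ σ : Equiv.Perm n, ∀ i, A i (σ i) ≠ 0 := by
  by_contra! hA
  refine h ?_
  rw [← det_transpose, det_apply]
  refine Finset.sum_eq_zero fun σ _ => ?_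
  obtain ⟨i, hi⟩ := hA σ
  rw [Finset.prod_eq_zero (Finset.mem_univ i) hi, smul_zero]

theorem apply_eq_of_conj_diagonal_eq_diagonal [CommRing R] [NoZeroDivisors R]
    {g : (Matrix n n R)ˣ} {v w : n → R}
    (h : (g : Matrix n n R) * diagonal v * ((g⁻¹ : (Matrix n n R)ˣ) : Matrix n n R) =
      diagonal w)
    {i j : n} (hij : (g : Matrix n n R) i j ≠ 0) : w i = v j := by
  rw [Units.mul_inv_eq_iff_eq_mul] at h
  have hij' := congrFun (congrFun h i) j
  rw [mul_diagonal, diagonal_mul] at hij'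
  exact mul_right_cancel₀ hij (hij'.symm.trans (mul_comm _ _))

theorem permMatrix_mul_diagonal_mul_permMatrix_inv [NonAssocSemiring R] (σ : Equiv.Perm n)
    (v : n → R) : σ.permMatrix R * diagonal v * σ⁻¹.permMatrix R = diagonal (v ∘ σ) := by
  rw [PEquiv.toMatrix_toPEquiv_mul, PEquiv.mul_toMatrix_toPEquiv, submatrix_submatrix]
  exact submatrix_diagonal_equiv v σ

end Matrix

/-- For linear subspaces `V, W ⊆ F^n`, the Lie algebras
`diag(V)` and `diag(W)` of diagonal matrices are conjugate by some invertible
matrix iff `V` and `W` are related by a permutation of coordinates. -/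
theorem stmt_1 (F : Type*) [Field F] (n : ℕ) (V W : Submodule F (Fin n → F)) :
    (∃ g : (Matrix (Fin n) (Fin n) F)ˣ,
      (fun M => (g : Matrix (Fin n) (Fin n) F) * M *
          ((g⁻¹ : (Matrix (Fin n) (Fin n) F)ˣ) : Matrix (Fin n) (Fin n) F)) ''
        (Matrix.diagonal '' (V : Set (Fin n → F))) =
      Matrix.diagonal '' (W : Set (Fin n → F)))
    ↔ ∃ σ : Equiv.Perm (Fin n),
        (fun v : Fin n → F => fun i => v (σ i)) '' (V : Set (Fin n → F)) =
          (W : Set (Fin n → F)) := by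
  constructor
  · rintro ⟨g, hg⟩
    obtain ⟨σ, hσ⟩ :=
      exists_perm_forall_apply_ne_zero_of_det_ne_zero (det_ne_zero_of_left_inverse g.inv_mul)
    refine ⟨σ, (image_image_eq_image_iff diagonal_injective fun v hv => ?_).mp hg⟩
    obtain ⟨w, -, hw⟩ : (g : Matrix (Fin n) (Fin n) F) * diagonal v *
        ((g⁻¹ : (Matrix (Fin n) (Fin n) F)ˣ) : Matrix (Fin n) (Fin n) F) ∈
          diagonal '' (W : Set (Fin n → F)) :=
      hg ▸ mem_image_of_mem _ (mem_image_of_mem _ hv)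
    rw [← hw]
    exact congrArg diagonal (funext fun i => apply_eq_of_conj_diagonal_eq_diagonal hw.symm (hσ i))
  · rintro ⟨σ, hσ⟩
    refine ⟨(permMatrixHom (R := F)).toHomUnits σ⁻¹,
      (image_image_eq_image_iff diagonal_injective fun v _ => ?_).mpr hσ⟩
    simp only [MonoidHom.coe_toHomUnits, ← map_inv, permMatrixHom_apply, inv_inv]
    exact permMatrix_mul_diagonal_mul_permMatrix_inv σ v
end

section
/- Let F be a field and A an F-linear subspace of diagonal n×n matrices over F such that for every pair of indices i ≠ j there exists M ∈ A with M_{ii} ≠ M_{jj} (i.e., every simultaneous weight space of A is 1-dimensional). If g is an invertible n×n matrix over F such that every element of {g M g⁻¹ : M ∈ A} is a diagonal matrix, then g is a monomial matrix: there exist a permutation σ of {1,…,n} and nonzero scalars d_1,…,d_n ∈ F such that g_{ij} = d_j if i = σ(j) and g_{ij} = 0 otherwise. -/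
/-! If `g M g⁻¹ = D` with `M`, `D` diagonal, then comparing the `(i, j)` entries of `g M = D g`
gives `M j j = D i i` whenever `g i j ≠ 0`. So two nonzero entries `g i j`, `g i j'` in one row
force `M j j = M j' j'` for every `M ∈ A`, hence `j = j'` by the separation hypothesis. An
invertible matrix with no zero column and at most one nonzero entry per row is monomial. -/

namespace Matrix

variable {ι R : Type*} [Fintype ι] [DecidableEq ι]

theorem IsDiag.apply_eq_of_mul_eq_mul [CommRing R] [NoZeroDivisors R] {M D G : Matrix ι ι R}
    (hM : M.IsDiag) (hD : D.IsDiag) (h : G * M = D * G) {i j : ι} (hij : G i j ≠ 0) :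
    M j j = D i i := by
  have hij_entry := congrFun₂ h i j
  rw [← hM.diagonal_diag, ← hD.diagonal_diag, mul_diagonal, diagonal_mul] at hij_entry
  exact mul_left_cancel₀ hij (hij_entry.trans (mul_comm _ _))

theorem eq_of_apply_ne_zero_of_forall_mul_eq [CommRing R] [NoZeroDivisors R]
    {S : Set (Matrix ι ι R)} (hS : ∀ M ∈ S, M.IsDiag)
    (hsep : ∀ j j' : ι, j ≠ j' → ∃ M ∈ S, M j j ≠ M j' j')
    {G : Matrix ι ι R} (hG : ∀ M ∈ S, ∃ D : Matrix ι ι R, D.IsDiag ∧ G * M = D * G)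
    {i j j' : ι} (hj : G i j ≠ 0) (hj' : G i j' ≠ 0) : j = j' := by
  by_contra hne
  obtain ⟨M, hMS, hMne⟩ := hsep j j' hne
  obtain ⟨D, hD, hGM⟩ := hG M hMS
  exact hMne <| ((hS M hMS).apply_eq_of_mul_eq_mul hD hGM hj).trans
    ((hS M hMS).apply_eq_of_mul_eq_mul hD hGM hj').symm

theorem exists_apply_ne_zero_of_isUnit_det [CommRing R] [Nontrivial R] {G : Matrix ι ι R}
    (hG : IsUnit G.det) (j : ι) : ∃ i, G i j ≠ 0 := by
  by_contra! hcol
  exact hG.ne_zero (det_eq_zero_of_column_eq_zero j hcol)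

omit [Fintype ι] in
theorem exists_perm_eq_ite_of_apply_ne_zero [Finite ι] [Zero R] {G : Matrix ι ι R}
    (hrow : ∀ i j j', G i j ≠ 0 → G i j' ≠ 0 → j = j') (hcol : ∀ j, ∃ i, G i j ≠ 0) :
    ∃ (σ : Equiv.Perm ι) (d : ι → R), (∀ j, d j ≠ 0) ∧
      ∀ i j, G i j = if i = σ j then d j else 0 := by
  choose σ hσ using hcol
  have hσ_inj : Function.Injective σ := fun j j' hjj' =>
    hrow (σ j) j j' (hσ j) (hjj' ▸ hσ j')
  let e := Equiv.ofBijective σ (Finite.injective_iff_bijective.mp hσ_inj)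
  refine ⟨e, fun j => G (σ j) j, hσ, fun i j => ?_⟩
  split_ifs with h
  · rw [h]; rfl
  · by_contra hij
    obtain ⟨j', rfl⟩ := e.surjective i
    exact h (congrArg e (hrow (σ j') j' j (hσ j') hij))

end Matrix

/-- If `A` is a linear space of diagonal matrices all of whose
simultaneous weight spaces are 1-dimensional (for all `i ≠ j` some `M ∈ A` has
`M i i ≠ M j j`), and `g` is invertible with `g A g⁻¹` consisting of diagonal
matrices, then `g` is a monomial matrix. -/
theorem stmt_2 (F : Type*) [Field F] (n : ℕ)
    (A : Submodule F (Matrix (Fin n) (Fin n) F))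
    (hA : ∀ M ∈ A, M.IsDiag)
    (hsep : ∀ i j : Fin n, i ≠ j → ∃ M ∈ A, M i i ≠ M j j)
    (g : (Matrix (Fin n) (Fin n) F)ˣ)
    (hg : ∀ M ∈ A, ((g : Matrix (Fin n) (Fin n) F) * M *
        ((g⁻¹ : (Matrix (Fin n) (Fin n) F)ˣ) : Matrix (Fin n) (Fin n) F)).IsDiag) :
    ∃ (σ : Equiv.Perm (Fin n)) (d : Fin n → F), (∀ j, d j ≠ 0) ∧
      ∀ i j, (g : Matrix (Fin n) (Fin n) F) i j = if i = σ j then d j else 0 := by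
  have hconj : ∀ M ∈ (A : Set (Matrix (Fin n) (Fin n) F)), ∃ D : Matrix (Fin n) (Fin n) F,
      D.IsDiag ∧ (g : Matrix (Fin n) (Fin n) F) * M = D * g :=
    fun M hM => ⟨_, hg M hM, by simp [mul_assoc]⟩
  exact Matrix.exists_perm_eq_ite_of_apply_ne_zero
    (fun _ _ _ => Matrix.eq_of_apply_ne_zero_of_forall_mul_eq hA hsep hconj)
    (Matrix.exists_apply_ne_zero_of_isUnit_det (Matrix.isUnits_det_units g))
end

section
/- Let G be a finite simple graph with m edges and n vertices, and F a field. If w is a nonzero vector in the row space of M(G) over F with at most 5 nonzero coordinates, then there exist an edge e of G and a nonzero scalar c ∈ F such that w = c · (row e of M(G)). -/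
/-- Row `e` of the generator matrix `M(G) = [I_m | I_m | I_m | D]` of Petrank–Roth type,
as a vector indexed by three copies of the edge set followed by the vertex set.
`D` is the edge-vertex incidence matrix of `G`. -/
def MGrow (F : Type*) [Field F] {V : Type*} [DecidableEq V] (G : SimpleGraph V)
    (e : G.edgeSet) : (G.edgeSet ⊕ G.edgeSet ⊕ G.edgeSet ⊕ V) → F :=
  Sum.elim (fun e' => if e' = e then 1 else 0)
    (Sum.elim (fun e' => if e' = e then 1 else 0)
      (Sum.elim (fun e' => if e' = e then 1 else 0)
        (fun v => if v ∈ (e : Sym2 V) then 1 else 0)))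

/-- A nonzero vector of the row space of `M(G)` of Hamming weight
at most `5` is a nonzero scalar multiple of a row of `M(G)`. -/
theorem stmt_4 (F : Type*) [Field F] {V : Type*} [Fintype V] [DecidableEq V]
    (G : SimpleGraph V) [DecidableRel G.Adj]
    (w : (G.edgeSet ⊕ G.edgeSet ⊕ G.edgeSet ⊕ V) → F)
    (hw : w ∈ Submodule.span F (Set.range (MGrow F G)))
    (hw0 : w ≠ 0)
    (hwt : {j | w j ≠ 0}.ncard ≤ 5) :
    ∃ (e : G.edgeSet) (c : F), c ≠ 0 ∧ w = c • MGrow F G e := by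
  classical
  obtain ⟨c, hc⟩ := Finsupp.mem_span_range_iff_exists_finsupp.mp hw
  -- the three identity blocks read off the coefficients
  have h1 : ∀ e' : G.edgeSet, w (Sum.inl e') = c e' := by
    intro e'
    rw [← hc, Finsupp.sum, Finset.sum_apply]
    have key : ∀ i ∈ c.support, (c i • MGrow F G i) (Sum.inl e') =
        if e' = i then c i else 0 := by
      intro i _
      simp only [Pi.smul_apply, MGrow, Sum.elim_inl, Sum.elim_inr, smul_eq_mul]
      split <;> simp
    rw [Finset.sum_congr rfl key, Finset.sum_ite_eq]
    split <;> simp_all [Finsupp.notMem_support_iff]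
  have h2 : ∀ e' : G.edgeSet, w (Sum.inr (Sum.inl e')) = c e' := by
    intro e'
    rw [← hc, Finsupp.sum, Finset.sum_apply]
    have key : ∀ i ∈ c.support, (c i • MGrow F G i) (Sum.inr (Sum.inl e')) =
        if e' = i then c i else 0 := by
      intro i _
      simp only [Pi.smul_apply, MGrow, Sum.elim_inl, Sum.elim_inr, smul_eq_mul]
      split <;> simp
    rw [Finset.sum_congr rfl key, Finset.sum_ite_eq]
    split <;> simp_all [Finsupp.notMem_support_iff]
  have h3 : ∀ e' : G.edgeSet, w (Sum.inr (Sum.inr (Sum.inl e'))) = c e' := by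
    intro e'
    rw [← hc, Finsupp.sum, Finset.sum_apply]
    have key : ∀ i ∈ c.support, (c i • MGrow F G i) (Sum.inr (Sum.inr (Sum.inl e'))) =
        if e' = i then c i else 0 := by
      intro i _
      simp only [Pi.smul_apply, MGrow, Sum.elim_inl, Sum.elim_inr, smul_eq_mul]
      split <;> simp
    rw [Finset.sum_congr rfl key, Finset.sum_ite_eq]
    split <;> simp_all [Finsupp.notMem_support_iff]
  -- c is nonzero
  have hc0 : c ≠ 0 := by
    rintro rfl
    apply hw0
    rw [← hc]
    simp
  obtain ⟨e, he⟩ : ∃ e, c e ≠ 0 := by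
    by_contra h
    push_neg at h
    exact hc0 (Finsupp.ext fun e => h e)
  -- uniqueness of the nonzero coefficient
  have huniq : ∀ e' : G.edgeSet, e' ≠ e → c e' = 0 := by
    intro e' hne
    by_contra he'
    have hsub : (({Sum.inl e, Sum.inl e', Sum.inr (Sum.inl e), Sum.inr (Sum.inl e'),
        Sum.inr (Sum.inr (Sum.inl e)), Sum.inr (Sum.inr (Sum.inl e'))} :
        Finset (G.edgeSet ⊕ G.edgeSet ⊕ G.edgeSet ⊕ V)) : Set _) ⊆ {j | w j ≠ 0} := by
      intro j hj
      simp only [Finset.coe_insert, Set.mem_insert_iff, Finset.coe_singleton,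
        Set.mem_singleton_iff] at hj
      rcases hj with rfl | rfl | rfl | rfl | rfl | rfl <;>
        simp only [Set.mem_setOf_eq, h1, h2, h3] <;> assumption
    have hcard : ({Sum.inl e, Sum.inl e', Sum.inr (Sum.inl e), Sum.inr (Sum.inl e'),
        Sum.inr (Sum.inr (Sum.inl e)), Sum.inr (Sum.inr (Sum.inl e'))} :
        Finset (G.edgeSet ⊕ G.edgeSet ⊕ G.edgeSet ⊕ V)).card = 6 := by
      rw [Finset.card_insert_of_notMem (by simp [hne, hne.symm]),
        Finset.card_insert_of_notMem (by simp [hne, hne.symm]),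
        Finset.card_insert_of_notMem (by simp [hne, hne.symm]),
        Finset.card_insert_of_notMem (by simp [hne, hne.symm]),
        Finset.card_insert_of_notMem (by simp [hne, hne.symm]),
        Finset.card_singleton]
    have h6 : 6 ≤ {j | w j ≠ 0}.ncard := by
      calc (6 : ℕ) = (({Sum.inl e, Sum.inl e', Sum.inr (Sum.inl e), Sum.inr (Sum.inl e'),
            Sum.inr (Sum.inr (Sum.inl e)), Sum.inr (Sum.inr (Sum.inl e'))} :
            Finset (G.edgeSet ⊕ G.edgeSet ⊕ G.edgeSet ⊕ V)) : Set _).ncard := by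
            rw [Set.ncard_coe_finset, hcard]
        _ ≤ {j | w j ≠ 0}.ncard := Set.ncard_le_ncard hsub (Set.toFinite _)
    omega
  have hcs : c = Finsupp.single e (c e) := by
    ext e'
    rcases eq_or_ne e' e with rfl | hne
    · simp
    · simp [Finsupp.single_apply, Ne.symm hne, huniq e' hne]
  refine ⟨e, c e, he, ?_⟩
  rw [← hc, hcs, Finsupp.sum_single_index (by simp)]
  simp
end

section
/- Let G₁ and G₂ be finite simple graphs, each with n vertices and m edges (with vertices identified with {1,…,n} and edges enumerated by {1,…,m}), and let F be a field. If S is an invertible m×m matrix over F and P is a (3m+n)×(3m+n) permutation matrix such that M(G₁) = S · M(G₂) · P, then S is a permutation matrix. -/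
/-- The generator matrix `M(G) = [I_m | I_m | I_m | D]` of Petrank–Roth type for a graph
`G` on vertex set `Fin n` whose edges are enumerated by `ε : Fin m ≃ G.edgeSet`;
columns are indexed by three copies of `Fin m` (the three identity blocks) followed by
`Fin n` (the incidence matrix `D`, `D_{e,v} = 1` iff `v` is an endpoint of `e`). -/
def MGfin (F : Type*) [Field F] {n m : ℕ} (G : SimpleGraph (Fin n))
    (ε : Fin m ≃ G.edgeSet) :
    Matrix (Fin m) (Fin m ⊕ Fin m ⊕ Fin m ⊕ Fin n) F :=
  Matrix.of fun i => Sum.elim (fun j => if j = i then 1 else 0)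
    (Sum.elim (fun j => if j = i then 1 else 0)
      (Sum.elim (fun j => if j = i then 1 else 0)
        (fun v => if v ∈ ((ε i : G.edgeSet) : Sym2 (Fin n)) then 1 else 0)))

lemma sym2_three_mem {α : Type*} (s : Sym2 α) {a b c : α}
    (ha : a ∈ s) (hb : b ∈ s) (hc : c ∈ s) : a = b ∨ a = c ∨ b = c := by
  induction s using Sym2.ind with
  | _ x y =>
    simp only [Sym2.mem_iff] at ha hb hc
    rcases ha with rfl | rfl <;> rcases hb with rfl | rfl <;>
      rcases hc with rfl | rfl <;> tauto

/-- If `M(G₁) = S · M(G₂) · P` with `S` an invertible `m × m` matrix and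
`P` a `(3m+n) × (3m+n)` permutation matrix, then `S` is a permutation matrix. -/
theorem stmt_5 (F : Type*) [Field F] (n m : ℕ) (G₁ G₂ : SimpleGraph (Fin n))
    (ε₁ : Fin m ≃ G₁.edgeSet) (ε₂ : Fin m ≃ G₂.edgeSet)
    (S : Matrix (Fin m) (Fin m) F) (hS : IsUnit S)
    (P : Matrix (Fin m ⊕ Fin m ⊕ Fin m ⊕ Fin n) (Fin m ⊕ Fin m ⊕ Fin m ⊕ Fin n) F)
    (hP : ∃ τ : Equiv.Perm (Fin m ⊕ Fin m ⊕ Fin m ⊕ Fin n),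
      ∀ i j, P i j = if i = τ j then 1 else 0)
    (h : MGfin F G₁ ε₁ = S * MGfin F G₂ ε₂ * P) :
    ∃ π : Equiv.Perm (Fin m), ∀ i j, S i j = if i = π j then (1 : F) else 0 := by
  classical
  obtain ⟨τ, hτ⟩ := hP
  set N₂ := MGfin F G₂ ε₂ with hN₂def
  have hSinj : Function.Injective S.mulVec :=
    Matrix.mulVec_injective_iff_isUnit.mpr hS
  -- key column identity
  have key : ∀ c, S.mulVec (fun j => N₂ j (τ c)) = fun e => MGfin F G₁ ε₁ e c := by
    intro c
    funext e
    have he := congrFun (congrFun h e) c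
    rw [he]
    simp only [Matrix.mul_apply, Matrix.mulVec, dotProduct, hτ, mul_ite, mul_one,
      mul_zero, Finset.sum_ite_eq, Finset.sum_ite_eq', Finset.mem_univ, if_true]
  have mv_delta : ∀ k : Fin m,
      S.mulVec (fun j => if k = j then (1:F) else 0) = fun e => S e k := by
    intro k
    funext e
    simp [Matrix.mulVec, dotProduct, mul_ite]
  -- classify columns of N₂
  have colclass : ∀ d : Fin m ⊕ Fin m ⊕ Fin m ⊕ Fin n,
      (∃ k : Fin m, (fun j => N₂ j d) = fun j => if k = j then (1:F) else 0) ∨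
      (∃ v : Fin n, d = Sum.inr (Sum.inr (Sum.inr v))) := by
    rintro (k | k | k | v)
    · exact Or.inl ⟨k, rfl⟩
    · exact Or.inl ⟨k, rfl⟩
    · exact Or.inl ⟨k, rfl⟩
    · exact Or.inr ⟨v, rfl⟩
  have main : ∀ i : Fin m, ∃ k : Fin m, ∀ e, S e k = if i = e then (1:F) else 0 := by
    intro i
    have h₁ := key (Sum.inl i)
    have h₂ := key (Sum.inr (Sum.inl i))
    have h₃ := key (Sum.inr (Sum.inr (Sum.inl i)))
    have hrhs : (fun e => MGfin F G₁ ε₁ e (Sum.inl i)) = fun e => if i = e then (1:F) else 0 := rfl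
    have hrhs₂ : (fun e => MGfin F G₁ ε₁ e (Sum.inr (Sum.inl i)))
        = fun e => if i = e then (1:F) else 0 := rfl
    have hrhs₃ : (fun e => MGfin F G₁ ε₁ e (Sum.inr (Sum.inr (Sum.inl i))))
        = fun e => if i = e then (1:F) else 0 := rfl
    rw [hrhs] at h₁; rw [hrhs₂] at h₂; rw [hrhs₃] at h₃
    -- helper: if some column is a delta, done
    have done_of_delta : ∀ (u : Fin m → F), S.mulVec u = (fun e => if i = e then (1:F) else 0) →
        (∃ k : Fin m, u = fun j => if k = j then (1:F) else 0) →
        ∃ k : Fin m, ∀ e, S e k = if i = e then (1:F) else 0 := by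
      rintro u hu ⟨k, rfl⟩
      refine ⟨k, fun e => ?_⟩
      have := (mv_delta k).symm.trans hu
      exact congrFun this e
    rcases colclass (τ (Sum.inl i)) with hc₁ | ⟨v₁, hv₁⟩
    · exact done_of_delta _ h₁ hc₁
    rcases colclass (τ (Sum.inr (Sum.inl i))) with hc₂ | ⟨v₂, hv₂⟩
    · exact done_of_delta _ h₂ hc₂
    rcases colclass (τ (Sum.inr (Sum.inr (Sum.inl i)))) with hc₃ | ⟨v₃, hv₃⟩
    · exact done_of_delta _ h₃ hc₃
    -- all three are vertex columns: derive contradiction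
    exfalso
    have hu12 : (fun j => N₂ j (τ (Sum.inl i))) = fun j => N₂ j (τ (Sum.inr (Sum.inl i))) :=
      hSinj (h₁.trans h₂.symm)
    have hu13 : (fun j => N₂ j (τ (Sum.inl i)))
        = fun j => N₂ j (τ (Sum.inr (Sum.inr (Sum.inl i)))) := hSinj (h₁.trans h₃.symm)
    -- distinctness of vertices
    have hv12 : v₁ ≠ v₂ := by
      rintro rfl
      have : τ (Sum.inl i) = τ (Sum.inr (Sum.inl i)) := hv₁.trans hv₂.symm
      simpa using τ.injective this
    have hv13 : v₁ ≠ v₃ := by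
      rintro rfl
      have : τ (Sum.inl i) = τ (Sum.inr (Sum.inr (Sum.inl i))) := hv₁.trans hv₃.symm
      simpa using τ.injective this
    have hv23 : v₂ ≠ v₃ := by
      rintro rfl
      have : τ (Sum.inr (Sum.inl i)) = τ (Sum.inr (Sum.inr (Sum.inl i))) := hv₂.trans hv₃.symm
      simpa using τ.injective this
    -- the column is nonzero
    have hune : (fun j => N₂ j (τ (Sum.inl i))) ≠ 0 := by
      intro h0
      have : S.mulVec 0 = (fun e => if i = e then (1:F) else 0) := by rw [← h0]; exact h₁
      have h1 := congrFun this i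
      simp [Matrix.mulVec_zero] at h1
    obtain ⟨e, he⟩ := Function.ne_iff.mp hune
    -- unfold column entries at vertex indices
    have col_v : ∀ (v : Fin n) (j : Fin m), N₂ j (Sum.inr (Sum.inr (Sum.inr v)))
        = if v ∈ ((ε₂ j : G₂.edgeSet) : Sym2 (Fin n)) then (1:F) else 0 := fun _ _ => rfl
    have hm1 : v₁ ∈ ((ε₂ e : G₂.edgeSet) : Sym2 (Fin n)) := by
      by_contra hmem
      apply he
      rw [hv₁, col_v, if_neg hmem]
      rfl
    have hm2 : v₂ ∈ ((ε₂ e : G₂.edgeSet) : Sym2 (Fin n)) := by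
      by_contra hmem
      apply he
      have := congrFun hu12 e
      rw [this, hv₂, col_v, if_neg hmem]
      rfl
    have hm3 : v₃ ∈ ((ε₂ e : G₂.edgeSet) : Sym2 (Fin n)) := by
      by_contra hmem
      apply he
      have := congrFun hu13 e
      rw [this, hv₃, col_v, if_neg hmem]
      rfl
    rcases sym2_three_mem _ hm1 hm2 hm3 with h' | h' | h' <;> [exact hv12 h'; exact hv13 h'; exact hv23 h']
  choose σ hσ using main
  have hinj : Function.Injective σ := by
    intro a b hab
    by_contra hne
    have ha := hσ a a
    rw [if_pos rfl, hab] at ha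
    have hb := hσ b a
    rw [if_neg (fun hh => hne hh.symm)] at hb
    exact one_ne_zero (α := F) (ha.symm.trans hb)
  let πe : Fin m ≃ Fin m := Equiv.ofBijective σ ((Fintype.bijective_iff_injective_and_card σ).mpr ⟨hinj, rfl⟩)
  refine ⟨πe.symm, fun a j => ?_⟩
  have : σ (πe.symm j) = j := πe.apply_symm_apply j
  have hs := hσ (πe.symm j) a
  rw [this] at hs
  rw [hs]
  by_cases hh : πe.symm j = a
  · simp [hh]
  · rw [if_neg hh, if_neg (fun hh2 => hh hh2.symm)]
end

section
/- Let F be a field and let G₁, G₂ be finite simple graphs on vertex set {1,…,n}, each with m edges (edges enumerated by {1,…,m}). Then G₁ and G₂ are isomorphic as graphs if and only if the codes C_i = rowspace(M(G_i)) ⊆ F^{3m+n} are permutation equivalent, i.e., there exists a permutation σ of the 3m+n coordinates such that {(x_{σ(1)},…,x_{σ(3m+n)}) : x ∈ C₁} = C₂. -/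
open Sum Finset Function

section aux
variable {F : Type*} [Field F] {n m : ℕ}

private lemma sum2_exists (e : Sym2 (Fin n)) : ∃ a b, e = s(a, b) :=
  ⟨e.out.1, e.out.2, (e.out_eq).symm⟩

private lemma mg01 {G : SimpleGraph (Fin n)} {ε : Fin m ≃ G.edgeSet} (i : Fin m)
    (c : Fin m ⊕ Fin m ⊕ Fin m ⊕ Fin n) :
    MGfin F G ε i c = 0 ∨ MGfin F G ε i c = 1 := by
  rcases c with j | c
  · simp only [MGfin, Matrix.of_apply, Sum.elim_inl]; split_ifs <;> simp
  rcases c with j | c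
  · simp only [MGfin, Matrix.of_apply, Sum.elim_inr, Sum.elim_inl]; split_ifs <;> simp
  rcases c with j | v <;>
  · simp only [MGfin, Matrix.of_apply, Sum.elim_inr, Sum.elim_inl]; split_ifs <;> simp

private lemma mg_supp {G : SimpleGraph (Fin n)} {ε : Fin m ≃ G.edgeSet} {i : Fin m}
    {a b : Fin n} (hab : ((ε i : G.edgeSet) : Sym2 (Fin n)) = s(a, b))
    {c : Fin m ⊕ Fin m ⊕ Fin m ⊕ Fin n} (hc : MGfin F G ε i c ≠ 0) :
    c ∈ ({Sum.inl i, Sum.inr (Sum.inl i), Sum.inr (Sum.inr (Sum.inl i)),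
        Sum.inr (Sum.inr (Sum.inr a)), Sum.inr (Sum.inr (Sum.inr b))} :
      Finset (Fin m ⊕ Fin m ⊕ Fin m ⊕ Fin n)) := by
  rcases c with j | c
  · have : j = i := by by_contra h; simp [MGfin, h] at hc
    simp [this]
  rcases c with j | c
  · have : j = i := by by_contra h; simp [MGfin, h] at hc
    simp [this]
  rcases c with j | v
  · have : j = i := by by_contra h; simp [MGfin, h] at hc
    simp [this]
  · have hv : v ∈ ((ε i : G.edgeSet) : Sym2 (Fin n)) := by
      by_contra h; simp [MGfin, h] at hc
    rw [hab, Sym2.mem_iff] at hv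
    rcases hv with h | h <;> simp [h]

private lemma exists_tau {G₁ G₂ : SimpleGraph (Fin n)} (ε₁ : Fin m ≃ G₁.edgeSet)
    (ε₂ : Fin m ≃ G₂.edgeSet) (σ : Equiv.Perm (Fin m ⊕ Fin m ⊕ Fin m ⊕ Fin n))
    (hmem : ∀ i, (fun k => MGfin F G₁ ε₁ i (σ k)) ∈
      Submodule.span F (Set.range fun i => MGfin F G₂ ε₂ i)) :
    ∃ τ : Equiv.Perm (Fin m), ∀ i k, MGfin F G₁ ε₁ i (σ k) = MGfin F G₂ ε₂ (τ i) k := by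
  classical
  have key : ∀ i, ∃ j, ∀ k, MGfin F G₁ ε₁ i (σ k) = MGfin F G₂ ε₂ j k := by
    intro i
    obtain ⟨c, hc⟩ := (Submodule.mem_span_range_iff_exists_fun F).mp (hmem i)
    have hyk : ∀ k, MGfin F G₁ ε₁ i (σ k) = ∑ j, c j * MGfin F G₂ ε₂ j k := by
      intro k; rw [← congrFun hc k]; simp [Finset.sum_apply]
    have h1 : ∀ j₀, MGfin F G₁ ε₁ i (σ (Sum.inl j₀)) = c j₀ := by
      intro j₀; rw [hyk]
      simp [MGfin, mul_ite, Finset.sum_ite_eq]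
    have h2 : ∀ j₀, MGfin F G₁ ε₁ i (σ (Sum.inr (Sum.inl j₀))) = c j₀ := by
      intro j₀; rw [hyk]
      simp [MGfin, mul_ite, Finset.sum_ite_eq]
    have h3 : ∀ j₀, MGfin F G₁ ε₁ i (σ (Sum.inr (Sum.inr (Sum.inl j₀)))) = c j₀ := by
      intro j₀; rw [hyk]
      simp [MGfin, mul_ite, Finset.sum_ite_eq]
    obtain ⟨a, b, hab⟩ := sum2_exists ((ε₁ i : G₁.edgeSet) : Sym2 (Fin n))
    -- at most one nonzero coefficient
    have hone : ∀ j j', c j ≠ 0 → c j' ≠ 0 → j = j' := by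
      intro j j' hj hj'
      by_contra hne
      have hc5 : ({Sum.inl i, Sum.inr (Sum.inl i), Sum.inr (Sum.inr (Sum.inl i)),
          Sum.inr (Sum.inr (Sum.inr a)), Sum.inr (Sum.inr (Sum.inr b))} :
            Finset (Fin m ⊕ Fin m ⊕ Fin m ⊕ Fin n)).card ≤ 5 := by
        refine le_trans (Finset.card_insert_le _ _) (Nat.succ_le_succ ?_)
        refine le_trans (Finset.card_insert_le _ _) (Nat.succ_le_succ ?_)
        refine le_trans (Finset.card_insert_le _ _) (Nat.succ_le_succ ?_)
        exact le_trans (Finset.card_insert_le _ _)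
          (Nat.succ_le_succ (Finset.card_singleton _).le)
      set T : Finset (Fin m ⊕ Fin m ⊕ Fin m ⊕ Fin n) :=
        {Sum.inl j, Sum.inl j', Sum.inr (Sum.inl j), Sum.inr (Sum.inl j'),
         Sum.inr (Sum.inr (Sum.inl j)), Sum.inr (Sum.inr (Sum.inl j'))} with hT
      have hTcard : T.card = 6 := by
        rw [hT]
        rw [Finset.card_insert_of_notMem (by simp [hne]),
          Finset.card_insert_of_notMem (by simp [Ne.symm hne]),
          Finset.card_insert_of_notMem (by simp [hne]),
          Finset.card_insert_of_notMem (by simp [Ne.symm hne]),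
          Finset.card_insert_of_notMem (by simp [hne]),
          Finset.card_singleton]
      have hsub : T.image σ ⊆ ({Sum.inl i, Sum.inr (Sum.inl i), Sum.inr (Sum.inr (Sum.inl i)),
          Sum.inr (Sum.inr (Sum.inr a)), Sum.inr (Sum.inr (Sum.inr b))} :
            Finset (Fin m ⊕ Fin m ⊕ Fin m ⊕ Fin n)) := by
        intro x hx
        simp only [Finset.mem_image] at hx
        obtain ⟨t, ht, rfl⟩ := hx
        have hyt : MGfin F G₁ ε₁ i (σ t) ≠ 0 := by
          rw [hT] at ht
          simp only [Finset.mem_insert, Finset.mem_singleton] at ht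
          rcases ht with rfl | rfl | rfl | rfl | rfl | rfl
          · rw [h1]; exact hj
          · rw [h1]; exact hj'
          · rw [h2]; exact hj
          · rw [h2]; exact hj'
          · rw [h3]; exact hj
          · rw [h3]; exact hj'
        exact mg_supp hab hyt
      have h6 : (T.image σ).card = 6 := by
        rw [Finset.card_image_of_injective _ σ.injective, hTcard]
      have := Finset.card_le_card hsub
      omega
    -- at least one nonzero coefficient
    have hex : ∃ j, c j ≠ 0 := by
      by_contra hall
      push_neg at hall
      have h1' : MGfin F G₁ ε₁ i (σ (σ.symm (Sum.inl i))) = 1 := by simp [MGfin]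
      rw [hyk] at h1'
      simp [hall] at h1'
    obtain ⟨j, hj⟩ := hex
    refine ⟨j, fun k => ?_⟩
    have hcj : c j = 1 := by
      have h01 := mg01 (F := F) (ε := ε₁) i (σ (Sum.inl j))
      rw [h1] at h01
      tauto
    have hk : MGfin F G₁ ε₁ i (σ k) = ∑ j', c j' * MGfin F G₂ ε₂ j' k := hyk k
    rw [Finset.sum_eq_single j (fun j' _ hj' => by
      have : c j' = 0 := by by_contra hcc; exact hj' (hone j' j hcc hj)
      simp [this]) (by simp)] at hk
    rw [hcj, one_mul] at hk
    exact hk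
  choose τ₀ hτ₀ using key
  have hinj : Function.Injective τ₀ := by
    intro i i' h
    have h1 := hτ₀ i (σ.symm (Sum.inl i))
    have h2 := hτ₀ i' (σ.symm (Sum.inl i))
    rw [h] at h1
    rw [← h2] at h1
    simp only [Equiv.apply_symm_apply, MGfin, Matrix.of_apply, Sum.elim_inl] at h1
    by_contra hne
    simp [hne] at h1
  exact ⟨Equiv.ofBijective τ₀ (Finite.injective_iff_bijective.mp hinj),
    fun i k => hτ₀ i k⟩

private lemma ite_one_zero_congr {P Q : Prop} [Decidable P] [Decidable Q]
    (h : (if P then (1:F) else 0) = if Q then 1 else 0) : P ↔ Q := by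
  constructor <;> intro hh <;> by_contra hc <;> simp [hh, hc] at h

private lemma card_filter_equiv {α : Type*} [Fintype α] [DecidableEq α] (e : Equiv.Perm α)
    (P : α → Prop) [DecidablePred P] :
    (Finset.univ.filter fun a => P (e a)).card = (Finset.univ.filter P).card := by
  refine Finset.card_bij' (fun a _ => e a) (fun b _ => e.symm b) ?_ ?_ ?_ ?_ <;> simp

private lemma endpoints_card {G : SimpleGraph (Fin n)} (e : G.edgeSet) :
    (Finset.univ.filter fun v : Fin n => v ∈ (e : Sym2 (Fin n))).card = 2 := by
  classical
  obtain ⟨a, b, hab⟩ := sum2_exists (e : Sym2 (Fin n))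
  have hadj : G.Adj a b := G.mem_edgeSet.mp (hab ▸ e.2)
  have hne : a ≠ b := hadj.ne
  have hset : (Finset.univ.filter fun v : Fin n => v ∈ (e : Sym2 (Fin n))) = {a, b} := by
    ext v; simp [hab, Sym2.mem_iff]
  rw [hset, Finset.card_insert_of_notMem (by simp [hne]), Finset.card_singleton]


private lemma finset_equiv_of_card_eq {α β : Type*} {s : Finset α} {t : Finset β}
    (h : s.card = t.card) : Nonempty ({x // x ∈ s} ≃ {y // y ∈ t}) := by
  have hc : Fintype.card {x // x ∈ s} = Fintype.card {y // y ∈ t} := by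
    rw [Fintype.card_coe, Fintype.card_coe]
    exact h
  exact ⟨Fintype.equivOfCardEq hc⟩

set_option maxHeartbeats 1000000 in
private lemma backward_dir {G₁ G₂ : SimpleGraph (Fin n)} (ε₁ : Fin m ≃ G₁.edgeSet)
    (ε₂ : Fin m ≃ G₂.edgeSet) (σ : Equiv.Perm (Fin m ⊕ Fin m ⊕ Fin m ⊕ Fin n))
    (h : (fun x : (Fin m ⊕ Fin m ⊕ Fin m ⊕ Fin n) → F => fun j => x (σ j)) ''
            (Submodule.span F (Set.range fun i => MGfin F G₁ ε₁ i) :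
              Set ((Fin m ⊕ Fin m ⊕ Fin m ⊕ Fin n) → F)) =
          (Submodule.span F (Set.range fun i => MGfin F G₂ ε₂ i) :
              Set ((Fin m ⊕ Fin m ⊕ Fin m ⊕ Fin n) → F))) :
    Nonempty (G₁ ≃g G₂) := by
  classical
  have hmem : ∀ i, (fun k => MGfin F G₁ ε₁ i (σ k)) ∈
      Submodule.span F (Set.range fun i => MGfin F G₂ ε₂ i) := by
    intro i
    have : (fun k => MGfin F G₁ ε₁ i (σ k)) ∈
        (Submodule.span F (Set.range fun i => MGfin F G₂ ε₂ i) :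
          Set ((Fin m ⊕ Fin m ⊕ Fin m ⊕ Fin n) → F)) := by
      rw [← h]
      exact Set.mem_image_of_mem _ (Submodule.subset_span (Set.mem_range_self i))
    exact this
  obtain ⟨τ, heq⟩ := exists_tau ε₁ ε₂ σ hmem
  set d₁ : Fin n → ℕ :=
    fun w => (Finset.univ.filter fun i : Fin m => w ∈ ((ε₁ i : G₁.edgeSet) : Sym2 (Fin n))).card
    with hd₁
  set d₂ : Fin n → ℕ :=
    fun v => (Finset.univ.filter fun j : Fin m => v ∈ ((ε₂ j : G₂.edgeSet) : Sym2 (Fin n))).card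
    with hd₂
  have hd₂τ : ∀ v, (Finset.univ.filter
      fun i : Fin m => v ∈ ((ε₂ (τ i) : G₂.edgeSet) : Sym2 (Fin n))).card = d₂ v := by
    intro v
    exact card_filter_equiv τ (fun j => v ∈ ((ε₂ j : G₂.edgeSet) : Sym2 (Fin n)))
  have hmemdeg₂ : ∀ (v : Fin n) (i : Fin m), v ∈ ((ε₂ (τ i) : G₂.edgeSet) : Sym2 (Fin n)) →
      1 ≤ d₂ v := by
    intro v i hv
    exact Finset.card_pos.mpr ⟨τ i, Finset.mem_filter.mpr ⟨Finset.mem_univ _, hv⟩⟩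
  have hmemdeg₁ : ∀ (w : Fin n) (i : Fin m), w ∈ ((ε₁ i : G₁.edgeSet) : Sym2 (Fin n)) →
      1 ≤ d₁ w := by
    intro w i hw
    exact Finset.card_pos.mpr ⟨i, Finset.mem_filter.mpr ⟨Finset.mem_univ _, hw⟩⟩
  have huniq₂ : ∀ v, d₂ v = 1 → ∀ i i', v ∈ ((ε₂ (τ i) : G₂.edgeSet) : Sym2 (Fin n)) →
      v ∈ ((ε₂ (τ i') : G₂.edgeSet) : Sym2 (Fin n)) → i = i' := by
    intro v hv i i' hi hi'
    exact Finset.card_le_one.mp (le_of_eq ((hd₂τ v).trans hv))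
      i (Finset.mem_filter.mpr ⟨Finset.mem_univ _, hi⟩)
      i' (Finset.mem_filter.mpr ⟨Finset.mem_univ _, hi'⟩)
  have huniq₁ : ∀ w, d₁ w = 1 → ∀ i i', w ∈ ((ε₁ i : G₁.edgeSet) : Sym2 (Fin n)) →
      w ∈ ((ε₁ i' : G₁.edgeSet) : Sym2 (Fin n)) → i = i' := by
    intro w hw i i' hi hi'
    exact Finset.card_le_one.mp (le_of_eq hw)
      i (Finset.mem_filter.mpr ⟨Finset.mem_univ _, hi⟩)
      i' (Finset.mem_filter.mpr ⟨Finset.mem_univ _, hi'⟩)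
  -- the vertex map on vertices of degree ≥ 2
  have hψex : ∀ v, 2 ≤ d₂ v → ∃ w, σ (Sum.inr (Sum.inr (Sum.inr v))) = Sum.inr (Sum.inr (Sum.inr w)) ∧
      ∀ i, (w ∈ ((ε₁ i : G₁.edgeSet) : Sym2 (Fin n)) ↔
        v ∈ ((ε₂ (τ i) : G₂.edgeSet) : Sym2 (Fin n))) := by
    intro v hv
    rcases hk : σ (Sum.inr (Sum.inr (Sum.inr v))) with j | j | j | w
    · exfalso
      have hiff : ∀ i, ((j : Fin m) = i) ↔ v ∈ ((ε₂ (τ i) : G₂.edgeSet) : Sym2 (Fin n)) := by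
        intro i
        have h' := heq i (Sum.inr (Sum.inr (Sum.inr v)))
        rw [hk] at h'
        simp only [MGfin, Matrix.of_apply, Sum.elim_inl, Sum.elim_inr] at h'
        exact ite_one_zero_congr h'
      have hfil : (Finset.univ.filter
          fun i : Fin m => v ∈ ((ε₂ (τ i) : G₂.edgeSet) : Sym2 (Fin n))) = {j} := by
        ext i
        simp [← hiff i, eq_comm]
      have := hd₂τ v
      rw [hfil, Finset.card_singleton] at this
      omega
    · exfalso
      have hiff : ∀ i, ((j : Fin m) = i) ↔ v ∈ ((ε₂ (τ i) : G₂.edgeSet) : Sym2 (Fin n)) := by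
        intro i
        have h' := heq i (Sum.inr (Sum.inr (Sum.inr v)))
        rw [hk] at h'
        simp only [MGfin, Matrix.of_apply, Sum.elim_inl, Sum.elim_inr] at h'
        exact ite_one_zero_congr h'
      have hfil : (Finset.univ.filter
          fun i : Fin m => v ∈ ((ε₂ (τ i) : G₂.edgeSet) : Sym2 (Fin n))) = {j} := by
        ext i
        simp [← hiff i, eq_comm]
      have := hd₂τ v
      rw [hfil, Finset.card_singleton] at this
      omega
    · exfalso
      have hiff : ∀ i, ((j : Fin m) = i) ↔ v ∈ ((ε₂ (τ i) : G₂.edgeSet) : Sym2 (Fin n)) := by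
        intro i
        have h' := heq i (Sum.inr (Sum.inr (Sum.inr v)))
        rw [hk] at h'
        simp only [MGfin, Matrix.of_apply, Sum.elim_inl, Sum.elim_inr] at h'
        exact ite_one_zero_congr h'
      have hfil : (Finset.univ.filter
          fun i : Fin m => v ∈ ((ε₂ (τ i) : G₂.edgeSet) : Sym2 (Fin n))) = {j} := by
        ext i
        simp [← hiff i, eq_comm]
      have := hd₂τ v
      rw [hfil, Finset.card_singleton] at this
      omega
    · refine ⟨w, rfl, fun i => ?_⟩
      have h' := heq i (Sum.inr (Sum.inr (Sum.inr v)))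
      rw [hk] at h'
      simp only [MGfin, Matrix.of_apply, Sum.elim_inr] at h'
      exact ite_one_zero_congr h'
  choose ψ hψσ hψinc using hψex
  have hψdeg : ∀ v (hv : 2 ≤ d₂ v), d₁ (ψ v hv) = d₂ v := by
    intro v hv
    have hset : (Finset.univ.filter fun i : Fin m =>
        ψ v hv ∈ ((ε₁ i : G₁.edgeSet) : Sym2 (Fin n))) =
        (Finset.univ.filter fun i : Fin m =>
          v ∈ ((ε₂ (τ i) : G₂.edgeSet) : Sym2 (Fin n))) := by
      ext i
      simp only [Finset.mem_filter, Finset.mem_univ, true_and]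
      exact hψinc v hv i
    show (Finset.univ.filter fun i : Fin m =>
        ψ v hv ∈ ((ε₁ i : G₁.edgeSet) : Sym2 (Fin n))).card = d₂ v
    rw [hset]
    exact hd₂τ v
  have hψinj : ∀ v hv v' hv', ψ v hv = ψ v' hv' → v = v' := by
    intro v hv v' hv' hh
    have h1 := hψσ v hv
    have h2 := hψσ v' hv'
    rw [hh] at h1
    rw [← h2] at h1
    have := σ.injective h1
    simpa using this
  have hψsurj : ∀ w, 2 ≤ d₁ w → ∃ v, ∃ hv : 2 ≤ d₂ v, ψ v hv = w := by
    intro w hw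
    rcases hk : σ.symm (Sum.inr (Sum.inr (Sum.inr w))) with j | j | j | v
    · exfalso
      have hiff : ∀ i, (w ∈ ((ε₁ i : G₁.edgeSet) : Sym2 (Fin n))) ↔ (j : Fin m) = τ i := by
        intro i
        have h' := heq i (σ.symm (Sum.inr (Sum.inr (Sum.inr w))))
        simp only [Equiv.apply_symm_apply] at h'
        rw [hk] at h'
        simp only [MGfin, Matrix.of_apply, Sum.elim_inl, Sum.elim_inr] at h'
        exact ite_one_zero_congr h'
      have hfil : (Finset.univ.filter
          fun i : Fin m => w ∈ ((ε₁ i : G₁.edgeSet) : Sym2 (Fin n))) = {τ.symm j} := by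
        ext i
        simp only [Finset.mem_filter, Finset.mem_univ, true_and, Finset.mem_singleton, hiff i]
        constructor <;> intro hh <;> simp [hh]
      have hw' : 2 ≤ (Finset.univ.filter
          fun i : Fin m => w ∈ ((ε₁ i : G₁.edgeSet) : Sym2 (Fin n))).card := hw
      rw [hfil, Finset.card_singleton] at hw'
      omega
    · exfalso
      have hiff : ∀ i, (w ∈ ((ε₁ i : G₁.edgeSet) : Sym2 (Fin n))) ↔ (j : Fin m) = τ i := by
        intro i
        have h' := heq i (σ.symm (Sum.inr (Sum.inr (Sum.inr w))))
        simp only [Equiv.apply_symm_apply] at h'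
        rw [hk] at h'
        simp only [MGfin, Matrix.of_apply, Sum.elim_inl, Sum.elim_inr] at h'
        exact ite_one_zero_congr h'
      have hfil : (Finset.univ.filter
          fun i : Fin m => w ∈ ((ε₁ i : G₁.edgeSet) : Sym2 (Fin n))) = {τ.symm j} := by
        ext i
        simp only [Finset.mem_filter, Finset.mem_univ, true_and, Finset.mem_singleton, hiff i]
        constructor <;> intro hh <;> simp [hh]
      have hw' : 2 ≤ (Finset.univ.filter
          fun i : Fin m => w ∈ ((ε₁ i : G₁.edgeSet) : Sym2 (Fin n))).card := hw
      rw [hfil, Finset.card_singleton] at hw'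
      omega
    · exfalso
      have hiff : ∀ i, (w ∈ ((ε₁ i : G₁.edgeSet) : Sym2 (Fin n))) ↔ (j : Fin m) = τ i := by
        intro i
        have h' := heq i (σ.symm (Sum.inr (Sum.inr (Sum.inr w))))
        simp only [Equiv.apply_symm_apply] at h'
        rw [hk] at h'
        simp only [MGfin, Matrix.of_apply, Sum.elim_inl, Sum.elim_inr] at h'
        exact ite_one_zero_congr h'
      have hfil : (Finset.univ.filter
          fun i : Fin m => w ∈ ((ε₁ i : G₁.edgeSet) : Sym2 (Fin n))) = {τ.symm j} := by
        ext i
        simp only [Finset.mem_filter, Finset.mem_univ, true_and, Finset.mem_singleton, hiff i]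
        constructor <;> intro hh <;> simp [hh]
      have hw' : 2 ≤ (Finset.univ.filter
          fun i : Fin m => w ∈ ((ε₁ i : G₁.edgeSet) : Sym2 (Fin n))).card := hw
      rw [hfil, Finset.card_singleton] at hw'
      omega
    · have hσv : σ (Sum.inr (Sum.inr (Sum.inr v))) = Sum.inr (Sum.inr (Sum.inr w)) := by
        rw [← hk, Equiv.apply_symm_apply]
      have hiff : ∀ i, (w ∈ ((ε₁ i : G₁.edgeSet) : Sym2 (Fin n))) ↔
          v ∈ ((ε₂ (τ i) : G₂.edgeSet) : Sym2 (Fin n)) := by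
        intro i
        have h' := heq i (Sum.inr (Sum.inr (Sum.inr v)))
        rw [hσv] at h'
        simp only [MGfin, Matrix.of_apply, Sum.elim_inr] at h'
        exact ite_one_zero_congr h'
      have hdv : d₂ v = d₁ w := by
        rw [← hd₂τ v]
        have hset : (Finset.univ.filter fun i : Fin m =>
            v ∈ ((ε₂ (τ i) : G₂.edgeSet) : Sym2 (Fin n))) =
            (Finset.univ.filter fun i : Fin m =>
              w ∈ ((ε₁ i : G₁.edgeSet) : Sym2 (Fin n))) := by
          ext i
          simp only [Finset.mem_filter, Finset.mem_univ, true_and]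
          exact (hiff i).symm
        rw [hset]
      have hv : 2 ≤ d₂ v := by omega
      refine ⟨v, hv, ?_⟩
      have h2 : (Sum.inr (Sum.inr (Sum.inr (ψ v hv))) :
          Fin m ⊕ Fin m ⊕ Fin m ⊕ Fin n) = Sum.inr (Sum.inr (Sum.inr w)) := by
        rw [← hψσ v hv, hσv]
      simpa using h2
  -- per-edge endpoint counts
  have hend₂ : ∀ i : Fin m, (Finset.univ.filter fun v : Fin n =>
      v ∈ ((ε₂ (τ i) : G₂.edgeSet) : Sym2 (Fin n))).card = 2 := fun i => endpoints_card _
  have hend₁ : ∀ i : Fin m, (Finset.univ.filter fun w : Fin n =>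
      w ∈ ((ε₁ i : G₁.edgeSet) : Sym2 (Fin n))).card = 2 := fun i => endpoints_card _
  have hsplit₂ : ∀ i : Fin m,
      (Finset.univ.filter fun v : Fin n =>
        v ∈ ((ε₂ (τ i) : G₂.edgeSet) : Sym2 (Fin n)) ∧ d₂ v = 1).card +
      (Finset.univ.filter fun v : Fin n =>
        v ∈ ((ε₂ (τ i) : G₂.edgeSet) : Sym2 (Fin n)) ∧ 2 ≤ d₂ v).card = 2 := by
    intro i
    have hpart := Finset.card_filter_add_card_filter_not
      (s := Finset.univ.filter fun v : Fin n => v ∈ ((ε₂ (τ i) : G₂.edgeSet) : Sym2 (Fin n)))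
      (p := fun v => d₂ v = 1)
    rw [Finset.filter_filter, Finset.filter_filter] at hpart
    have hconv : (Finset.univ.filter fun v : Fin n =>
        v ∈ ((ε₂ (τ i) : G₂.edgeSet) : Sym2 (Fin n)) ∧ ¬ d₂ v = 1) =
        (Finset.univ.filter fun v : Fin n =>
          v ∈ ((ε₂ (τ i) : G₂.edgeSet) : Sym2 (Fin n)) ∧ 2 ≤ d₂ v) := by
      ext v
      simp only [Finset.mem_filter, Finset.mem_univ, true_and]
      constructor
      · rintro ⟨hv, hnd⟩
        have := hmemdeg₂ v i hv
        exact ⟨hv, by omega⟩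
      · rintro ⟨hv, h2⟩
        exact ⟨hv, by omega⟩
    rw [hconv, hend₂ i] at hpart
    exact hpart
  have hsplit₁ : ∀ i : Fin m,
      (Finset.univ.filter fun w : Fin n =>
        w ∈ ((ε₁ i : G₁.edgeSet) : Sym2 (Fin n)) ∧ d₁ w = 1).card +
      (Finset.univ.filter fun w : Fin n =>
        w ∈ ((ε₁ i : G₁.edgeSet) : Sym2 (Fin n)) ∧ 2 ≤ d₁ w).card = 2 := by
    intro i
    have hpart := Finset.card_filter_add_card_filter_not
      (s := Finset.univ.filter fun w : Fin n => w ∈ ((ε₁ i : G₁.edgeSet) : Sym2 (Fin n)))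
      (p := fun w => d₁ w = 1)
    rw [Finset.filter_filter, Finset.filter_filter] at hpart
    have hconv : (Finset.univ.filter fun w : Fin n =>
        w ∈ ((ε₁ i : G₁.edgeSet) : Sym2 (Fin n)) ∧ ¬ d₁ w = 1) =
        (Finset.univ.filter fun w : Fin n =>
          w ∈ ((ε₁ i : G₁.edgeSet) : Sym2 (Fin n)) ∧ 2 ≤ d₁ w) := by
      ext w
      simp only [Finset.mem_filter, Finset.mem_univ, true_and]
      constructor
      · rintro ⟨hw, hnd⟩
        have := hmemdeg₁ w i hw
        exact ⟨hw, by omega⟩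
      · rintro ⟨hw, h2⟩
        exact ⟨hw, by omega⟩
    rw [hconv, hend₁ i] at hpart
    exact hpart
  have hC : ∀ i : Fin m,
      (Finset.univ.filter fun v : Fin n =>
        v ∈ ((ε₂ (τ i) : G₂.edgeSet) : Sym2 (Fin n)) ∧ 2 ≤ d₂ v).card =
      (Finset.univ.filter fun w : Fin n =>
        w ∈ ((ε₁ i : G₁.edgeSet) : Sym2 (Fin n)) ∧ 2 ≤ d₁ w).card := by
    intro i
    refine Finset.card_bij (fun v hv => ψ v (Finset.mem_filter.mp hv).2.2) ?_ ?_ ?_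
    · intro a ha
      obtain ⟨-, haE, had⟩ := Finset.mem_filter.mp ha
      refine Finset.mem_filter.mpr ⟨Finset.mem_univ _, (hψinc a had i).mpr haE, ?_⟩
      rw [hψdeg a had]
      exact had
    · intro a ha b hb hh
      exact hψinj a _ b _ hh
    · intro w hw
      obtain ⟨-, hwE, hwd⟩ := Finset.mem_filter.mp hw
      obtain ⟨v, hv, rfl⟩ := hψsurj w hwd
      refine ⟨v, Finset.mem_filter.mpr ⟨Finset.mem_univ _, (hψinc v hv i).mp hwE, hv⟩, rfl⟩
  have hAB : ∀ i : Fin m,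
      (Finset.univ.filter fun v : Fin n =>
        v ∈ ((ε₂ (τ i) : G₂.edgeSet) : Sym2 (Fin n)) ∧ d₂ v = 1).card =
      (Finset.univ.filter fun w : Fin n =>
        w ∈ ((ε₁ i : G₁.edgeSet) : Sym2 (Fin n)) ∧ d₁ w = 1).card := by
    intro i
    have h1 := hsplit₂ i
    have h2 := hsplit₁ i
    have h3 := hC i
    omega
  have hT : (Finset.univ.filter fun v : Fin n => 2 ≤ d₂ v).card =
      (Finset.univ.filter fun w : Fin n => 2 ≤ d₁ w).card := by
    refine Finset.card_bij (fun v hv => ψ v (Finset.mem_filter.mp hv).2) ?_ ?_ ?_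
    · intro a ha
      obtain ⟨-, had⟩ := Finset.mem_filter.mp ha
      refine Finset.mem_filter.mpr ⟨Finset.mem_univ _, ?_⟩
      rw [hψdeg a had]
      exact had
    · intro a ha b hb hh
      exact hψinj a _ b _ hh
    · intro w hw
      obtain ⟨-, hwd⟩ := Finset.mem_filter.mp hw
      obtain ⟨v, hv, rfl⟩ := hψsurj w hwd
      exact ⟨v, Finset.mem_filter.mpr ⟨Finset.mem_univ _, hv⟩, rfl⟩
  have hedge₂ : ∀ v, d₂ v = 1 → ∃ i, v ∈ ((ε₂ (τ i) : G₂.edgeSet) : Sym2 (Fin n)) := by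
    intro v hv
    have hpos : 0 < (Finset.univ.filter
        fun i : Fin m => v ∈ ((ε₂ (τ i) : G₂.edgeSet) : Sym2 (Fin n))).card := by
      rw [hd₂τ v]
      omega
    obtain ⟨i, hi⟩ := Finset.card_pos.mp hpos
    exact ⟨i, (Finset.mem_filter.mp hi).2⟩
  choose iv hivmem using hedge₂
  have hO₂ : (Finset.univ.filter fun v : Fin n => d₂ v = 1) =
      Finset.univ.biUnion (fun i : Fin m => Finset.univ.filter fun v : Fin n =>
        v ∈ ((ε₂ (τ i) : G₂.edgeSet) : Sym2 (Fin n)) ∧ d₂ v = 1) := by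
    ext v
    constructor
    · intro hv
      have h1 : d₂ v = 1 := (Finset.mem_filter.mp hv).2
      exact Finset.mem_biUnion.mpr ⟨iv v h1, Finset.mem_univ _,
        Finset.mem_filter.mpr ⟨Finset.mem_univ _, hivmem v h1, h1⟩⟩
    · intro hv
      obtain ⟨i, -, hi⟩ := Finset.mem_biUnion.mp hv
      exact Finset.mem_filter.mpr ⟨Finset.mem_univ _, (Finset.mem_filter.mp hi).2.2⟩
  have hO₁ : (Finset.univ.filter fun w : Fin n => d₁ w = 1) =
      Finset.univ.biUnion (fun i : Fin m => Finset.univ.filter fun w : Fin n =>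
        w ∈ ((ε₁ i : G₁.edgeSet) : Sym2 (Fin n)) ∧ d₁ w = 1) := by
    ext w
    constructor
    · intro hw
      have h1 : d₁ w = 1 := (Finset.mem_filter.mp hw).2
      have hdd : (Finset.univ.filter
          fun i : Fin m => w ∈ ((ε₁ i : G₁.edgeSet) : Sym2 (Fin n))).card = d₁ w := rfl
      have hpos : 0 < (Finset.univ.filter
          fun i : Fin m => w ∈ ((ε₁ i : G₁.edgeSet) : Sym2 (Fin n))).card := by omega
      obtain ⟨i, hi⟩ := Finset.card_pos.mp hpos
      exact Finset.mem_biUnion.mpr ⟨i, Finset.mem_univ _,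
        Finset.mem_filter.mpr ⟨Finset.mem_univ _, (Finset.mem_filter.mp hi).2, h1⟩⟩
    · intro hw
      obtain ⟨i, -, hi⟩ := Finset.mem_biUnion.mp hw
      exact Finset.mem_filter.mpr ⟨Finset.mem_univ _, (Finset.mem_filter.mp hi).2.2⟩
  have hdisj₂ : ∀ i ∈ Finset.univ, ∀ i' ∈ Finset.univ, i ≠ i' →
      Disjoint (Finset.univ.filter fun v : Fin n =>
        v ∈ ((ε₂ (τ i) : G₂.edgeSet) : Sym2 (Fin n)) ∧ d₂ v = 1)
      (Finset.univ.filter fun v : Fin n =>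
        v ∈ ((ε₂ (τ i') : G₂.edgeSet) : Sym2 (Fin n)) ∧ d₂ v = 1) := by
    intro i _ i' _ hne
    rw [Finset.disjoint_left]
    intro v hv hv'
    obtain ⟨-, hvE, hvd⟩ := Finset.mem_filter.mp hv
    obtain ⟨-, hvE', -⟩ := Finset.mem_filter.mp hv'
    exact hne (huniq₂ v hvd i i' hvE hvE')
  have hdisj₁ : ∀ i ∈ Finset.univ, ∀ i' ∈ Finset.univ, i ≠ i' →
      Disjoint (Finset.univ.filter fun w : Fin n =>
        w ∈ ((ε₁ i : G₁.edgeSet) : Sym2 (Fin n)) ∧ d₁ w = 1)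
      (Finset.univ.filter fun w : Fin n =>
        w ∈ ((ε₁ i' : G₁.edgeSet) : Sym2 (Fin n)) ∧ d₁ w = 1) := by
    intro i _ i' _ hne
    rw [Finset.disjoint_left]
    intro w hw hw'
    obtain ⟨-, hwE, hwd⟩ := Finset.mem_filter.mp hw
    obtain ⟨-, hwE', -⟩ := Finset.mem_filter.mp hw'
    exact hne (huniq₁ w hwd i i' hwE hwE')
  have hOcard : (Finset.univ.filter fun v : Fin n => d₂ v = 1).card =
      (Finset.univ.filter fun w : Fin n => d₁ w = 1).card := by
    rw [hO₂, hO₁, Finset.card_biUnion hdisj₂, Finset.card_biUnion hdisj₁]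
    exact Finset.sum_congr rfl fun i _ => hAB i
  have htot₂ : (Finset.univ.filter fun v : Fin n => d₂ v = 0).card +
      ((Finset.univ.filter fun v : Fin n => d₂ v = 1).card +
       (Finset.univ.filter fun v : Fin n => 2 ≤ d₂ v).card) = n := by
    have e1 := Finset.card_filter_add_card_filter_not
      (s := (Finset.univ : Finset (Fin n))) (p := fun v => d₂ v = 0)
    have e2 := Finset.card_filter_add_card_filter_not
      (s := Finset.univ.filter fun v : Fin n => ¬ d₂ v = 0) (p := fun v => d₂ v = 1)
    rw [Finset.filter_filter, Finset.filter_filter] at e2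
    have c1 : (Finset.univ.filter fun v : Fin n => ¬ d₂ v = 0 ∧ d₂ v = 1) =
        (Finset.univ.filter fun v : Fin n => d₂ v = 1) := by
      ext v
      simp only [Finset.mem_filter, Finset.mem_univ, true_and]
      omega
    have c2 : (Finset.univ.filter fun v : Fin n => ¬ d₂ v = 0 ∧ ¬ d₂ v = 1) =
        (Finset.univ.filter fun v : Fin n => 2 ≤ d₂ v) := by
      ext v
      simp only [Finset.mem_filter, Finset.mem_univ, true_and]
      omega
    rw [c1, c2] at e2
    rw [Finset.card_univ, Fintype.card_fin] at e1
    omega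
  have htot₁ : (Finset.univ.filter fun w : Fin n => d₁ w = 0).card +
      ((Finset.univ.filter fun w : Fin n => d₁ w = 1).card +
       (Finset.univ.filter fun w : Fin n => 2 ≤ d₁ w).card) = n := by
    have e1 := Finset.card_filter_add_card_filter_not
      (s := (Finset.univ : Finset (Fin n))) (p := fun w => d₁ w = 0)
    have e2 := Finset.card_filter_add_card_filter_not
      (s := Finset.univ.filter fun w : Fin n => ¬ d₁ w = 0) (p := fun w => d₁ w = 1)
    rw [Finset.filter_filter, Finset.filter_filter] at e2
    have c1 : (Finset.univ.filter fun w : Fin n => ¬ d₁ w = 0 ∧ d₁ w = 1) =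
        (Finset.univ.filter fun w : Fin n => d₁ w = 1) := by
      ext w
      simp only [Finset.mem_filter, Finset.mem_univ, true_and]
      omega
    have c2 : (Finset.univ.filter fun w : Fin n => ¬ d₁ w = 0 ∧ ¬ d₁ w = 1) =
        (Finset.univ.filter fun w : Fin n => 2 ≤ d₁ w) := by
      ext w
      simp only [Finset.mem_filter, Finset.mem_univ, true_and]
      omega
    rw [c1, c2] at e2
    rw [Finset.card_univ, Fintype.card_fin] at e1
    omega
  have hZ : (Finset.univ.filter fun v : Fin n => d₂ v = 0).card =
      (Finset.univ.filter fun w : Fin n => d₁ w = 0).card := by omega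
  -- the bijections on degree-1 and degree-0 parts
  have g : ∀ i : Fin m, {x // x ∈ (Finset.univ.filter fun v : Fin n =>
      v ∈ ((ε₂ (τ i) : G₂.edgeSet) : Sym2 (Fin n)) ∧ d₂ v = 1)} ≃
      {x // x ∈ (Finset.univ.filter fun w : Fin n =>
        w ∈ ((ε₁ i : G₁.edgeSet) : Sym2 (Fin n)) ∧ d₁ w = 1)} :=
    fun i => (finset_equiv_of_card_eq (hAB i)).some
  have z : {x // x ∈ (Finset.univ.filter fun v : Fin n => d₂ v = 0)} ≃
      {x // x ∈ (Finset.univ.filter fun w : Fin n => d₁ w = 0)} :=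
    (finset_equiv_of_card_eq hZ).some
  have pfA : ∀ v (h1 : d₂ v = 1), v ∈ (Finset.univ.filter fun u : Fin n =>
      u ∈ ((ε₂ (τ (iv v h1)) : G₂.edgeSet) : Sym2 (Fin n)) ∧ d₂ u = 1) :=
    fun v h1 => Finset.mem_filter.mpr ⟨Finset.mem_univ _, hivmem v h1, h1⟩
  have pfZ : ∀ v, ¬ 2 ≤ d₂ v → ¬ d₂ v = 1 →
      v ∈ (Finset.univ.filter fun u : Fin n => d₂ u = 0) :=
    fun v h2 h1 => Finset.mem_filter.mpr ⟨Finset.mem_univ _, by omega⟩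
  set φ : Fin n → Fin n := fun v =>
    if h2 : 2 ≤ d₂ v then ψ v h2
    else if h1 : d₂ v = 1 then ((g (iv v h1)) ⟨v, pfA v h1⟩ : Fin n)
    else ((z ⟨v, pfZ v h2 h1⟩ : Fin n)) with hφdef
  have hφ2 : ∀ v (h2 : 2 ≤ d₂ v), φ v = ψ v h2 := by
    intro v h2
    simp only [hφdef]
    rw [dif_pos h2]
  have hφ1 : ∀ v (h2 : ¬ 2 ≤ d₂ v) (h1 : d₂ v = 1),
      φ v = ((g (iv v h1)) ⟨v, pfA v h1⟩ : Fin n) := by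
    intro v h2 h1
    simp only [hφdef]
    rw [dif_neg h2, dif_pos h1]
  have hφ0 : ∀ v (h2 : ¬ 2 ≤ d₂ v) (h1 : ¬ d₂ v = 1),
      φ v = ((z ⟨v, pfZ v h2 h1⟩ : Fin n)) := by
    intro v h2 h1
    simp only [hφdef]
    rw [dif_neg h2, dif_neg h1]
  have hBmem : ∀ v (h2 : ¬ 2 ≤ d₂ v) (h1 : d₂ v = 1),
      φ v ∈ (Finset.univ.filter fun u : Fin n =>
        u ∈ ((ε₁ (iv v h1) : G₁.edgeSet) : Sym2 (Fin n)) ∧ d₁ u = 1) := by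
    intro v h2 h1
    rw [hφ1 v h2 h1]
    exact (g (iv v h1) ⟨v, pfA v h1⟩).2
  have hZmem : ∀ v (h2 : ¬ 2 ≤ d₂ v) (h1 : ¬ d₂ v = 1),
      φ v ∈ (Finset.univ.filter fun u : Fin n => d₁ u = 0) := by
    intro v h2 h1
    rw [hφ0 v h2 h1]
    exact (z ⟨v, pfZ v h2 h1⟩).2
  have hφdeg : ∀ v, d₁ (φ v) = d₂ v := by
    intro v
    by_cases h2 : 2 ≤ d₂ v
    · rw [hφ2 v h2]
      exact hψdeg v h2
    by_cases h1 : d₂ v = 1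
    · have hh := (Finset.mem_filter.mp (hBmem v h2 h1)).2.2
      omega
    · have hh := (Finset.mem_filter.mp (hZmem v h2 h1)).2
      omega
  have hφinj : Function.Injective φ := by
    intro v v' hh
    have hd : d₂ v = d₂ v' := by rw [← hφdeg v, hh, hφdeg v']
    by_cases h2 : 2 ≤ d₂ v
    · have h2' : 2 ≤ d₂ v' := by omega
      rw [hφ2 v h2, hφ2 v' h2'] at hh
      exact hψinj v h2 v' h2' hh
    by_cases h1 : d₂ v = 1
    · have h2' : ¬ 2 ≤ d₂ v' := by omega
      have h1' : d₂ v' = 1 := by omega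
      have hm1 := hBmem v h2 h1
      have hm2 := hBmem v' h2' h1'
      rw [hh] at hm1
      have hii : iv v' h1' = iv v h1 := huniq₁ (φ v') (Finset.mem_filter.mp hm2).2.2
        _ _ (Finset.mem_filter.mp hm2).2.1 (Finset.mem_filter.mp hm1).2.1
      have hgc : ∀ (i i' : Fin m), i = i' →
          ∀ (x : {a // a ∈ (Finset.univ.filter fun u : Fin n =>
              u ∈ ((ε₁ i : G₁.edgeSet) : Sym2 (Fin n)) ∧ d₁ u = 1)})
            (y : {a // a ∈ (Finset.univ.filter fun u : Fin n =>
              u ∈ ((ε₁ i' : G₁.edgeSet) : Sym2 (Fin n)) ∧ d₁ u = 1)}),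
            (x : Fin n) = (y : Fin n) →
            (((g i).symm x : Fin n)) = (((g i').symm y : Fin n)) := by
        rintro i _ rfl x y hxy
        rw [Subtype.ext hxy]
      have hval : ((g (iv v h1) ⟨v, pfA v h1⟩ : Fin n)) =
          ((g (iv v' h1') ⟨v', pfA v' h1'⟩ : Fin n)) := by
        rw [← hφ1 v h2 h1, ← hφ1 v' h2' h1']
        exact hh
      have hfin := hgc (iv v h1) (iv v' h1') hii.symm _ _ hval
      simpa using hfin
    · have h2' : ¬ 2 ≤ d₂ v' := by omega
      have h1' : ¬ d₂ v' = 1 := by omega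
      have hval : ((z ⟨v, pfZ v h2 h1⟩ : Fin n)) = ((z ⟨v', pfZ v' h2' h1'⟩ : Fin n)) := by
        rw [← hφ0 v h2 h1, ← hφ0 v' h2' h1']
        exact hh
      have hzz := z.injective (Subtype.ext hval)
      simpa using congrArg Subtype.val hzz
  have hφmem : ∀ (i : Fin m) (v : Fin n), v ∈ ((ε₂ (τ i) : G₂.edgeSet) : Sym2 (Fin n)) →
      φ v ∈ ((ε₁ i : G₁.edgeSet) : Sym2 (Fin n)) := by
    intro i v hv
    by_cases h2 : 2 ≤ d₂ v
    · rw [hφ2 v h2]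
      exact (hψinc v h2 i).mpr hv
    by_cases h1 : d₂ v = 1
    · have hii : iv v h1 = i := huniq₂ v h1 _ _ (hivmem v h1) hv
      have hh := (Finset.mem_filter.mp (hBmem v h2 h1)).2.1
      rw [← hii]
      exact hh
    · exfalso
      have := hmemdeg₂ v i hv
      omega
  have hφadj : ∀ v w, G₂.Adj v w → G₁.Adj (φ v) (φ w) := by
    intro v w hadj
    set j := ε₂.symm ⟨s(v, w), G₂.mem_edgeSet.mpr hadj⟩ with hj
    have hedge : ((ε₂ (τ (τ.symm j)) : G₂.edgeSet) : Sym2 (Fin n)) = s(v, w) := by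
      rw [Equiv.apply_symm_apply, hj, Equiv.apply_symm_apply]
    have hv : v ∈ ((ε₂ (τ (τ.symm j)) : G₂.edgeSet) : Sym2 (Fin n)) := by
      rw [hedge, Sym2.mem_iff]
      left
      rfl
    have hw : w ∈ ((ε₂ (τ (τ.symm j)) : G₂.edgeSet) : Sym2 (Fin n)) := by
      rw [hedge, Sym2.mem_iff]
      right
      rfl
    have hv' := hφmem (τ.symm j) v hv
    have hw' := hφmem (τ.symm j) w hw
    have hne : φ v ≠ φ w := fun hcon => hadj.ne (hφinj hcon)
    have hE := (Sym2.mem_and_mem_iff hne).mp ⟨hv', hw'⟩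
    exact G₁.mem_edgeSet.mp (hE ▸ (ε₁ (τ.symm j)).2)
  -- assemble the isomorphism
  haveI : Fintype ↥G₁.edgeSet := Fintype.ofEquiv _ ε₁
  haveI : Fintype ↥G₂.edgeSet := Fintype.ofEquiv _ ε₂
  have hc1 : Fintype.card ↥G₁.edgeSet = m :=
    (Fintype.card_congr ε₁.symm).trans (Fintype.card_fin m)
  have hc2 : Fintype.card ↥G₂.edgeSet = m :=
    (Fintype.card_congr ε₂.symm).trans (Fintype.card_fin m)
  let hom : G₂ →g G₁ := ⟨φ, fun {a b} hab => hφadj a b hab⟩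
  have hinjE : Function.Injective hom.mapEdgeSet :=
    SimpleGraph.Hom.mapEdgeSet.injective hom (by
      intro a b hab
      exact hφinj hab)
  have hbijE : Function.Bijective hom.mapEdgeSet :=
    (Fintype.bijective_iff_injective_and_card _).mpr ⟨hinjE, by rw [hc2, hc1]⟩
  have hadjiff : ∀ a b : Fin n, G₁.Adj (φ a) (φ b) → G₂.Adj a b := by
    intro a b hab
    obtain ⟨e, he⟩ := hbijE.2 ⟨s(φ a, φ b), G₁.mem_edgeSet.mpr hab⟩
    obtain ⟨x, y, hxy⟩ := sum2_exists ((e : G₂.edgeSet) : Sym2 (Fin n))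
    have hmap : Sym2.map φ ((e : G₂.edgeSet) : Sym2 (Fin n)) = s(φ a, φ b) :=
      congrArg Subtype.val he
    rw [hxy, Sym2.map_pair_eq, Sym2.eq_iff] at hmap
    have hadjxy : G₂.Adj x y := G₂.mem_edgeSet.mp (hxy ▸ (e : G₂.edgeSet).2)
    rcases hmap with ⟨hxa, hyb⟩ | ⟨hxb, hya⟩
    · rw [← hφinj hxa, ← hφinj hyb]
      exact hadjxy
    · rw [← hφinj hya, ← hφinj hxb]
      exact hadjxy.symm
  have hbijφ : Function.Bijective φ := Finite.injective_iff_bijective.mp hφinj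
  exact ⟨(SimpleGraph.Iso.symm ⟨Equiv.ofBijective φ hbijφ,
    fun {a b} => ⟨hadjiff a b, fun hab => hφadj a b hab⟩⟩ : G₁ ≃g G₂)⟩

private lemma forward_dir {G₁ G₂ : SimpleGraph (Fin n)} (ε₁ : Fin m ≃ G₁.edgeSet)
    (ε₂ : Fin m ≃ G₂.edgeSet) (φ : G₁ ≃g G₂) :
    ∃ σ : Equiv.Perm (Fin m ⊕ Fin m ⊕ Fin m ⊕ Fin n),
        (fun x : (Fin m ⊕ Fin m ⊕ Fin m ⊕ Fin n) → F => fun j => x (σ j)) ''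
            (Submodule.span F (Set.range fun i => MGfin F G₁ ε₁ i) :
              Set ((Fin m ⊕ Fin m ⊕ Fin m ⊕ Fin n) → F)) =
          (Submodule.span F (Set.range fun i => MGfin F G₂ ε₂ i) :
              Set ((Fin m ⊕ Fin m ⊕ Fin m ⊕ Fin n) → F)) := by
  classical
  set t : Fin m ≃ Fin m := (ε₁.trans φ.mapEdgeSet).trans ε₂.symm with ht
  set μ : Fin n ≃ Fin n := φ.toEquiv.symm with hμ
  refine ⟨Equiv.sumCongr t.symm (Equiv.sumCongr t.symm (Equiv.sumCongr t.symm μ)), ?_⟩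
  set σ := Equiv.sumCongr t.symm (Equiv.sumCongr t.symm (Equiv.sumCongr t.symm μ)) with hσ
  have hrow : ∀ i, (fun k => MGfin F G₁ ε₁ i (σ k)) = MGfin F G₂ ε₂ (t i) := by
    intro i
    funext k
    have hedge : ((ε₂ (t i) : G₂.edgeSet) : Sym2 (Fin n)) =
        Sym2.map φ ((ε₁ i : G₁.edgeSet) : Sym2 (Fin n)) := by
      rw [ht]
      simp only [Equiv.trans_apply, Equiv.apply_symm_apply]
      rfl
    rcases k with j | k
    · simp only [hσ, Equiv.sumCongr_apply, Sum.map_inl, MGfin, Matrix.of_apply, Sum.elim_inl]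
      by_cases h : j = t i
      · simp [h]
      · rw [if_neg h, if_neg (fun hh => h (by rw [← hh]; simp))]
    · rcases k with j | k
      · simp only [hσ, Equiv.sumCongr_apply, Sum.map_inr, Sum.map_inl, MGfin,
          Matrix.of_apply, Sum.elim_inr, Sum.elim_inl]
        by_cases h : j = t i
        · simp [h]
        · rw [if_neg h, if_neg (fun hh => h (by rw [← hh]; simp))]
      · rcases k with j | v
        · simp only [hσ, Equiv.sumCongr_apply, Sum.map_inr, Sum.map_inl, MGfin,
            Matrix.of_apply, Sum.elim_inr, Sum.elim_inl]
          by_cases h : j = t i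
          · simp [h]
          · rw [if_neg h, if_neg (fun hh => h (by rw [← hh]; simp))]
        · simp only [hσ, Equiv.sumCongr_apply, Sum.map_inr, MGfin, Matrix.of_apply,
            Sum.elim_inr]
          have : μ v ∈ ((ε₁ i : G₁.edgeSet) : Sym2 (Fin n)) ↔
              v ∈ ((ε₂ (t i) : G₂.edgeSet) : Sym2 (Fin n)) := by
            rw [hedge, Sym2.mem_map]
            constructor
            · intro h
              exact ⟨μ v, h, φ.apply_symm_apply v⟩
            · rintro ⟨u, hu, rfl⟩
              show φ.toEquiv.symm (φ.toEquiv u) ∈ _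
              rwa [Equiv.symm_apply_apply]
          by_cases h : μ v ∈ ((ε₁ i : G₁.edgeSet) : Sym2 (Fin n))
          · rw [if_pos h, if_pos (this.mp h)]
          · rw [if_neg h, if_neg (fun hh => h (this.mpr hh))]
  have hL : (fun x : (Fin m ⊕ Fin m ⊕ Fin m ⊕ Fin n) → F => fun j => x (σ j)) =
      ⇑(LinearMap.funLeft F F σ) := rfl
  rw [hL, ← Submodule.map_coe, Submodule.map_span]
  rw [← Set.range_comp]
  have : (⇑(LinearMap.funLeft F F ⇑σ) ∘ fun i => MGfin F G₁ ε₁ i) =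
      (fun i => MGfin F G₂ ε₂ i) ∘ ⇑t := by
    funext i
    exact hrow i
  rw [this, Set.range_comp, Equiv.range_eq_univ, Set.image_univ]

end aux

/-- Two graphs `G₁, G₂` on `n` vertices with `m` edges are isomorphic
iff the codes generated by `M(G₁)` and `M(G₂)` (their row spaces in `F^{3m+n}`) are
permutation equivalent. -/
theorem stmt_6 (F : Type*) [Field F] (n m : ℕ) (G₁ G₂ : SimpleGraph (Fin n))
    (ε₁ : Fin m ≃ G₁.edgeSet) (ε₂ : Fin m ≃ G₂.edgeSet) :
    Nonempty (G₁ ≃g G₂) ↔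
      ∃ σ : Equiv.Perm (Fin m ⊕ Fin m ⊕ Fin m ⊕ Fin n),
        (fun x : (Fin m ⊕ Fin m ⊕ Fin m ⊕ Fin n) → F => fun j => x (σ j)) ''
            (Submodule.span F (Set.range fun i => MGfin F G₁ ε₁ i) :
              Set ((Fin m ⊕ Fin m ⊕ Fin m ⊕ Fin n) → F)) =
          (Submodule.span F (Set.range fun i => MGfin F G₂ ε₂ i) :
              Set ((Fin m ⊕ Fin m ⊕ Fin m ⊕ Fin n) → F)) := by
  constructor
  · rintro ⟨φ⟩
    exact forward_dir ε₁ ε₂ φ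
  · rintro ⟨σ, hσ⟩
    exact backward_dir ε₁ ε₂ σ hσ
end

section
/- Let G be a finite simple graph with m edges and n vertices, and F a field. Suppose N is an m × (3m+n) matrix over F such that: the row space of N equals the row space of M(G); every row of N has at most 5 nonzero entries; and every linear combination of k ≥ 2 rows of N in which all k coefficients are nonzero has at least 6 nonzero entries. Then there exist a permutation π of {1,…,m} and nonzero scalars c_1,…,c_m ∈ F such that row i of N equals c_i · (row π(i) of M(G)) for every i. In other words, up to permutation and scaling of its rows, M(G) is the unique generator matrix of its code satisfying these properties. -/
/-!
A row of `M(G)` has weight at most `5` and lies in the row space of `N`. Writing it as a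
combination of rows of `N`, the weight bound `6` on combinations of at least two rows forces a
single nonzero coefficient, so every row of `M(G)` is a nonzero multiple of some row of `N`.
The identity block makes the rows of `M(G)` pairwise non-proportional, so this assignment of
rows is injective, hence a bijection of the (finite) edge set.
-/

open Function

theorem exists_smul_eq_of_mem_span_of_ncard_support_le {R ι κ : Type*} [Semiring R] [Fintype ι]
    {N : ι → κ → R} {w : κ → R} {k : ℕ} (hw : w ∈ Submodule.span R (Set.range N))
    (hw₀ : w ≠ 0) (hwk : {j | w j ≠ 0}.ncard ≤ k)
    (hcomb : ∀ c : ι → R, 2 ≤ {i | c i ≠ 0}.ncard →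
      k + 1 ≤ {j | (∑ i, c i • N i) j ≠ 0}.ncard) :
    ∃ i, ∃ d : R, d ≠ 0 ∧ w = d • N i := by
  classical
  obtain ⟨c, rfl⟩ := (Submodule.mem_span_range_iff_exists_fun R).mp hw
  have hc : {i | c i ≠ 0}.ncard ≤ 1 := by
    by_contra! h
    have := hcomb c h
    omega
  obtain ⟨i, hi⟩ : ∃ i, c i ≠ 0 := by
    by_contra! h
    exact hw₀ (by simp [h])
  have hsum : ∑ i', c i' • N i' = c i • N i := by
    refine Finset.sum_eq_single i (fun i' _ hi' => ?_) (by simp)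
    rw [of_not_not fun h => hi' ((Set.ncard_le_one (Set.toFinite _)).mp hc _ h _ hi), zero_smul]
  exact ⟨i, c i, hi, hsum⟩

section MGrow

variable {F : Type*} [Field F] {V : Type*} [DecidableEq V] {G : SimpleGraph V}

@[simp]
theorem MGrow_inl (e e' : G.edgeSet) : MGrow F G e (Sum.inl e') = if e' = e then 1 else 0 :=
  rfl

theorem MGrow_ne_zero (e : G.edgeSet) : MGrow F G e ≠ 0 :=
  fun h => by simpa using congrFun h (Sum.inl e)

theorem ncard_support_MGrow_le (e : G.edgeSet) : {j | MGrow F G e j ≠ 0}.ncard ≤ 5 := by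
  induction he : (e : Sym2 V) using Sym2.ind with
  | h a b =>
    let s : Finset (G.edgeSet ⊕ G.edgeSet ⊕ G.edgeSet ⊕ V) :=
      {.inl e, .inr (.inl e), .inr (.inr (.inl e)), .inr (.inr (.inr a)), .inr (.inr (.inr b))}
    have hsub : {j | MGrow F G e j ≠ 0} ⊆ s := by
      rintro (e' | e' | e' | v) hj <;> simp_all [s, MGrow]
      tauto
    calc {j | MGrow F G e j ≠ 0}.ncard ≤ (s : Set _).ncard := Set.ncard_le_ncard hsub
      _ = s.card := Set.ncard_coe_finset s
      _ ≤ 5 := Finset.card_le_five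

theorem eq_of_MGrow_eq_smul {e e' : G.edgeSet} {a : F} (h : MGrow F G e' = a • MGrow F G e) :
    e' = e := by
  by_contra hne
  simpa [hne] using congrFun h (Sum.inl e')

end MGrow

theorem stmt_7_general (F : Type*) [Field F] {V : Type*} [Fintype V] [DecidableEq V]
    (G : SimpleGraph V) [DecidableRel G.Adj]
    (N : G.edgeSet → (G.edgeSet ⊕ G.edgeSet ⊕ G.edgeSet ⊕ V) → F)
    (hspan : Submodule.span F (Set.range N) = Submodule.span F (Set.range (MGrow F G)))
    (hcomb : ∀ c : G.edgeSet → F, 2 ≤ {e | c e ≠ 0}.ncard →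
      6 ≤ {j | (∑ e : G.edgeSet, c e • N e) j ≠ 0}.ncard) :
    ∃ (π : Equiv.Perm G.edgeSet) (c : G.edgeSet → F),
      (∀ e, c e ≠ 0) ∧ ∀ e, N e = c e • MGrow F G (π e) := by
  have hrow (f : G.edgeSet) : ∃ e, ∃ d : F, d ≠ 0 ∧ MGrow F G f = d • N e :=
    exists_smul_eq_of_mem_span_of_ncard_support_le
      (hspan ▸ Submodule.subset_span ⟨f, rfl⟩) (MGrow_ne_zero f) (ncard_support_MGrow_le f) hcomb
  choose σ d hd hσ using hrow
  have hinj : Injective σ := fun f₁ f₂ h =>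
    eq_of_MGrow_eq_smul (a := d f₁ / d f₂) <| by
      rw [hσ, hσ, h, smul_smul, div_mul_cancel₀ _ (hd f₂)]
  let τ := Equiv.ofBijective σ (Finite.injective_iff_bijective.mp hinj)
  refine ⟨τ.symm, fun e => (d (τ.symm e))⁻¹, fun e => inv_ne_zero (hd _), fun e => ?_⟩
  rw [hσ, smul_smul, inv_mul_cancel₀ (hd _), one_smul]
  exact congrArg N (τ.apply_symm_apply e).symm

/-- Up to permutation and scaling of its rows, `M(G)` is the unique
generator matrix of its code all of whose rows have Hamming weight at most `5` and all of
whose nondegenerate linear combinations of at least two rows have Hamming weight at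
least `6`.  Here a generator matrix is an `m × (3m+n)` matrix (rows indexed by the edges)
whose row space equals that of `M(G)`. -/
theorem stmt_7 (F : Type*) [Field F] {V : Type*} [Fintype V] [DecidableEq V]
    (G : SimpleGraph V) [DecidableRel G.Adj]
    (N : G.edgeSet → (G.edgeSet ⊕ G.edgeSet ⊕ G.edgeSet ⊕ V) → F)
    (hspan : Submodule.span F (Set.range N) = Submodule.span F (Set.range (MGrow F G)))
    (hrows : ∀ e, {j | N e j ≠ 0}.ncard ≤ 5)
    (hcomb : ∀ c : G.edgeSet → F, 2 ≤ {e | c e ≠ 0}.ncard →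
      6 ≤ {j | (∑ e : G.edgeSet, c e • N e) j ≠ 0}.ncard) :
    ∃ (π : Equiv.Perm G.edgeSet) (c : G.edgeSet → F),
      (∀ e, c e ≠ 0) ∧ ∀ e, N e = c e • MGrow F G (π e) :=
  stmt_7_general F G N hspan hcomb
end

section
/- Let Γ be the directed graph on the eleven vertices {1, 2, 3, A₁₂, A₂₃, A₃₁, B₂₁, B₃₂, B₁₃, A, B} with the following arcs: directed arcs 1→A₁₂, A₁₂→2, 2→A₂₃, A₂₃→3, 3→A₃₁, A₃₁→1, 1→B₁₃, B₁₃→3, 3→B₃₂, B₃₂→2, 2→B₂₁, B₂₁→1; and undirected edges (arcs in both directions) forming a triangle on {A₁₂, A₂₃, A₃₁}, a triangle on {B₂₁, B₃₂, B₁₃}, edges joining A to each of A₁₂, A₂₃, A₃₁, and edges joining B to each of B₂₁, B₃₂, B₁₃. Then every automorphism of Γ (a permutation σ of the vertices with u→w an arc if and only if σ(u)→σ(w) is an arc) maps the set {1,2,3} to itself, the restriction map from the automorphism group of Γ to the symmetric group on {1,2,3} is injective and surjective, and hence the automorphism group of Γ is isomorphic to S₃ acting naturally on {1,2,3}. -/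
/-- The eleven vertices of the color gadget `Γ`. -/
inductive GadgetV : Type
  | v1 | v2 | v3 | A12 | A23 | A31 | B21 | B32 | B13 | A | B
  deriving DecidableEq

instance : Fintype GadgetV where
  elems := {GadgetV.v1, GadgetV.v2, GadgetV.v3, GadgetV.A12, GadgetV.A23, GadgetV.A31,
    GadgetV.B21, GadgetV.B32, GadgetV.B13, GadgetV.A, GadgetV.B}
  complete := by intro x; cases x <;> decide

open GadgetV

/-- The arcs of the color gadget `Γ`: the twelve directed arcs
`1→A₁₂→2→A₂₃→3→A₃₁→1` and `1→B₁₃→3→B₃₂→2→B₂₁→1`, together with undirected edges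
(arcs in both directions) forming a triangle on `{A₁₂, A₂₃, A₃₁}`, a triangle on
`{B₂₁, B₃₂, B₁₃}`, edges from `A` to each `Aᵢⱼ`, and edges from `B` to each `Bⱼᵢ`. -/
def gadgetArcs : List (GadgetV × GadgetV) :=
  [(v1, A12), (A12, v2), (v2, A23), (A23, v3), (v3, A31), (A31, v1),
   (v1, B13), (B13, v3), (v3, B32), (B32, v2), (v2, B21), (B21, v1),
   (A12, A23), (A23, A12), (A23, A31), (A31, A23), (A31, A12), (A12, A31),
   (B21, B32), (B32, B21), (B32, B13), (B13, B32), (B13, B21), (B21, B13),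
   (A, A12), (A12, A), (A, A23), (A23, A), (A, A31), (A31, A),
   (B, B21), (B21, B), (B, B32), (B32, B), (B, B13), (B13, B)]

/-- The arc relation of `Γ`. -/
def GadgetArc (u w : GadgetV) : Prop := (u, w) ∈ gadgetArcs

/-- A permutation of the vertices is an automorphism of `Γ` iff it preserves the arc
relation in both directions. -/
def IsGadgetAut (σ : Equiv.Perm GadgetV) : Prop :=
  ∀ u w, GadgetArc u w ↔ GadgetArc (σ u) (σ w)

/-- The automorphism group of `Γ`, as a subgroup of the permutations of its vertices. -/
def gadgetAutGroup : Subgroup (Equiv.Perm GadgetV) where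
  carrier := {σ | IsGadgetAut σ}
  mul_mem' := by
    intro σ τ hσ hτ u w
    exact (hτ u w).trans (hσ (τ u) (τ w))
  one_mem' := by intro u w; rfl
  inv_mem' := by
    intro σ hσ u w
    simpa using (hσ (σ⁻¹ u) (σ⁻¹ w)).symm

/-- The three distinguished vertices `1, 2, 3` of `Γ`. -/
def gadgetT : Fin 3 → GadgetV := ![v1, v2, v3]

/-! The terminals `1, 2, 3` are exactly the vertices lying on no undirected edge, so every
automorphism permutes them. An automorphism fixing the terminals fixes each `Aᵢⱼ`, `Bⱼᵢ`, the unique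
vertex on a directed path of length two between its two terminals, and then `A` and `B`, which
are told apart by their neighbours among those six. So restriction to the terminals is injective;
it is onto because the rotation `(1 2 3)` and the reflection `(1 2)`, which exchanges the
`A`-side with the `B`-side, are automorphisms and generate `S₃`. -/

open Function Equiv

namespace Equiv.Perm

variable {α β : Type*}

noncomputable def restrictRangeHom (G : Subgroup (Perm α)) {f : β → α} (hf : Injective f)
    (hG : ∀ σ ∈ G, ∀ x, σ x ∈ Set.range f ↔ x ∈ Set.range f) : G →* Perm β :=
  (Equiv.ofInjective f hf).symm.permCongrHom.toMonoidHom.comp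
    { toFun := fun σ ↦ (σ : Perm α).subtypePerm (hG σ σ.2)
      map_one' := rfl
      map_mul' := fun _ _ => rfl }

theorem apply_restrictRangeHom_apply (G : Subgroup (Perm α)) {f : β → α} (hf : Injective f)
    (hG : ∀ σ ∈ G, ∀ x, σ x ∈ Set.range f ↔ x ∈ Set.range f) (σ : G) (b : β) :
    f (restrictRangeHom G hf hG σ b) = (σ : Perm α) (f b) :=
  apply_ofInjective_symm hf _

end Equiv.Perm

def IsDeterminedBy {α : Type*} (r : α → α → Prop) (S : Finset α) (x : α) : Prop :=
  ∀ y, (∀ s ∈ S, (r s y ↔ r s x) ∧ (r y s ↔ r x s)) → y = x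

instance {α : Type*} [Fintype α] [DecidableEq α] (r : α → α → Prop) [DecidableRel r]
    (S : Finset α) (x : α) : Decidable (IsDeterminedBy r S x) := by
  unfold IsDeterminedBy; infer_instance

namespace RelIso

variable {α : Type*} {r : α → α → Prop}

theorem exists_rel_and_rel_apply_iff (f : r ≃r r) (v : α) :
    (∃ u, r (f v) u ∧ r u (f v)) ↔ ∃ u, r v u ∧ r u v :=
  f.surjective.exists.trans (by simp only [f.map_rel_iff])

theorem apply_eq_self_of_isDeterminedBy (f : r ≃r r) {S : Finset α} (hS : ∀ s ∈ S, f s = s)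
    {x : α} (hx : IsDeterminedBy r S x) : f x = x :=
  hx _ fun s hs ↦ by
    constructor
    · conv_rhs => rw [← f.map_rel_iff, hS s hs]
    · conv_rhs => rw [← f.map_rel_iff, hS s hs]

end RelIso

instance : DecidableRel GadgetArc := fun u w ↦ inferInstanceAs (Decidable ((u, w) ∈ gadgetArcs))

def IsGadgetAut.toRelIso {σ : Perm GadgetV} (hσ : IsGadgetAut σ) : GadgetArc ≃r GadgetArc :=
  ⟨σ, (hσ _ _).symm⟩

@[simp]
theorem IsGadgetAut.coe_toRelIso {σ : Perm GadgetV} (hσ : IsGadgetAut σ) : ⇑hσ.toRelIso = σ :=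
  rfl

instance (σ : Perm GadgetV) : Decidable (IsGadgetAut σ) := by unfold IsGadgetAut; infer_instance

theorem gadgetT_injective : Injective gadgetT := by decide

theorem mem_range_gadgetT_iff (v : GadgetV) :
    v ∈ Set.range gadgetT ↔ ¬∃ u, GadgetArc v u ∧ GadgetArc u v := by
  rw [Set.mem_range]; revert v; decide

theorem IsGadgetAut.apply_mem_range_gadgetT_iff {σ : Perm GadgetV} (hσ : IsGadgetAut σ)
    (v : GadgetV) : σ v ∈ Set.range gadgetT ↔ v ∈ Set.range gadgetT := by
  simpa only [mem_range_gadgetT_iff, coe_toRelIso] using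
    (hσ.toRelIso.exists_rel_and_rel_apply_iff v).not

theorem isDeterminedBy_terminals :
    ∀ x ∈ ({A12, A23, A31, B21, B32, B13} : Finset GadgetV),
      IsDeterminedBy GadgetArc {v1, v2, v3} x := by decide

theorem isDeterminedBy_middle : ∀ x ∈ ({A, B} : Finset GadgetV),
      IsDeterminedBy GadgetArc {A12, A23, A31, B21, B32, B13} x := by decide

def gadgetRotation : Perm GadgetV := c[v1, v2, v3] * c[A12, A23, A31] * c[B13, B21, B32]

def gadgetSwap12 : Perm GadgetV :=
  swap v1 v2 * swap A12 B21 * swap A23 B13 * swap A31 B32 * swap A B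

theorem gadgetRotation_mem : gadgetRotation ∈ gadgetAutGroup := by
  show IsGadgetAut _; decide

theorem gadgetSwap12_mem : gadgetSwap12 ∈ gadgetAutGroup := by
  show IsGadgetAut _; decide

theorem IsGadgetAut.eq_one_of_forall_apply_gadgetT {σ : Perm GadgetV} (hσ : IsGadgetAut σ)
    (h : ∀ i, σ (gadgetT i) = gadgetT i) : σ = 1 := by
  have hterm : ∀ s ∈ ({v1, v2, v3} : Finset GadgetV), hσ.toRelIso s = s := by
    simp only [Finset.mem_insert, Finset.mem_singleton, coe_toRelIso]
    rintro s (rfl | rfl | rfl)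
    exacts [h 0, h 1, h 2]
  have hmid := fun s hs ↦ hσ.toRelIso.apply_eq_self_of_isDeterminedBy hterm
    (isDeterminedBy_terminals s hs)
  have hhub := fun s hs ↦ hσ.toRelIso.apply_eq_self_of_isDeterminedBy hmid
    (isDeterminedBy_middle s hs)
  ext x
  have hx : x ∈ ({v1, v2, v3} : Finset GadgetV) ∨
      x ∈ ({A12, A23, A31, B21, B32, B13} : Finset _) ∨ x ∈ ({A, B} : Finset _) := by
    cases x <;> decide
  rcases hx with hx | hx | hx
  exacts [hterm x hx, hmid x hx, hhub x hx]

noncomputable def gadgetRestrict : gadgetAutGroup →* Perm (Fin 3) :=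
  Perm.restrictRangeHom gadgetAutGroup gadgetT_injective fun _ ↦
    IsGadgetAut.apply_mem_range_gadgetT_iff

theorem gadgetT_gadgetRestrict_apply (σ : gadgetAutGroup) (i : Fin 3) :
    gadgetT (gadgetRestrict σ i) = (σ : Perm GadgetV) (gadgetT i) :=
  Perm.apply_restrictRangeHom_apply _ _ _ σ i

theorem gadgetRestrict_injective : Injective gadgetRestrict := by
  refine (injective_iff_map_eq_one _).mpr fun σ hσ ↦ Subtype.ext ?_
  refine IsGadgetAut.eq_one_of_forall_apply_gadgetT σ.2 fun i ↦ ?_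
  rw [← gadgetT_gadgetRestrict_apply, hσ, Perm.one_apply]

theorem gadgetRestrict_rotation :
    gadgetRestrict ⟨gadgetRotation, gadgetRotation_mem⟩ = finRotate 3 := by
  ext i
  refine congrArg Fin.val (gadgetT_injective ?_)
  rw [gadgetT_gadgetRestrict_apply]
  revert i; decide

theorem gadgetRestrict_swap12 :
    gadgetRestrict ⟨gadgetSwap12, gadgetSwap12_mem⟩ = swap 0 1 := by
  ext i
  refine congrArg Fin.val (gadgetT_injective ?_)
  rw [gadgetT_gadgetRestrict_apply]
  revert i; decide

theorem gadgetRestrict_surjective : Surjective gadgetRestrict := by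
  rw [← MonoidHom.range_eq_top, eq_top_iff,
    ← Perm.closure_cycle_adjacent_swap isCycle_finRotate support_finRotate 0,
    Subgroup.closure_le, Set.insert_subset_iff, Set.singleton_subset_iff]
  exact ⟨⟨_, gadgetRestrict_rotation⟩, ⟨_, gadgetRestrict_swap12⟩⟩

/-- Every automorphism of the color gadget `Γ` maps the vertex set
`{1,2,3}` to itself; the restriction map from `Aut(Γ)` to the permutations of `{1,2,3}`
is injective and surjective; hence `Aut(Γ)` is isomorphic to `S₃` (acting naturally on
`{1,2,3}`). -/
theorem stmt_13 :
    (∀ σ ∈ gadgetAutGroup, ∀ i : Fin 3, ∃ j : Fin 3, σ (gadgetT i) = gadgetT j) ∧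
    (∀ σ ∈ gadgetAutGroup, ∀ τ ∈ gadgetAutGroup,
      (∀ i : Fin 3, σ (gadgetT i) = τ (gadgetT i)) → σ = τ) ∧
    (∀ π : Equiv.Perm (Fin 3), ∃ σ ∈ gadgetAutGroup,
      ∀ i : Fin 3, σ (gadgetT i) = gadgetT (π i)) ∧
    Nonempty (gadgetAutGroup ≃* Equiv.Perm (Fin 3)) := by
  refine ⟨fun σ hσ i ↦ ⟨_, (gadgetT_gadgetRestrict_apply ⟨σ, hσ⟩ i).symm⟩,
    fun σ hσ τ hτ h ↦ ?_, fun π ↦ ?_,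
    ⟨MulEquiv.ofBijective _ ⟨gadgetRestrict_injective, gadgetRestrict_surjective⟩⟩⟩
  · have hστ : gadgetRestrict ⟨σ, hσ⟩ = gadgetRestrict ⟨τ, hτ⟩ := Equiv.ext fun i ↦
      gadgetT_injective (by simp only [gadgetT_gadgetRestrict_apply, h])
    exact congrArg Subtype.val (gadgetRestrict_injective hστ)
  · obtain ⟨σ, hσ⟩ := gadgetRestrict_surjective π
    exact ⟨σ, σ.2, fun i ↦ by rw [← hσ, gadgetT_gadgetRestrict_apply]⟩
end
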